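/- arXiv:2012.14135 — 6 statements merged into one kernel-verified Lean document; each statement's English description precedes it below -/
import Mathlib

section
/- Under assumptions (A1)–(A2) there exist constants ĉ₀, Ĉ₀ > 0, depending only on the bounds ρ̲, ρ̄, w̄, ε̄ and the bounds on P''(ρ) for ρ̲ ≤ ρ ≤ ρ̄, such that for all admissible states u = (ρ,w) and û = (ρ̂,ŵ) (i.e. pairs of functions on (0,ℓ) with ρ̲ ≤ ρ, ρ̂ ≤ ρ̄ and |w|, |ŵ| ≤ w̄ pointwise): ĉ₀ (‖√a(ρ − ρ̂)‖²_{L²(0,ℓ)} + ‖ε(w − ŵ)‖²_{L²(0,ℓ)}) ≤ H(u|û) ≤ Ĉ₀ (‖√a(ρ − ρ̂)‖²_{L²(0,ℓ)} + ‖ε(w − ŵ)‖²_{L²(0,ℓ)}). -/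
set_option maxHeartbeats 1000000

open Set

section AuxLemmas

private lemma psd_aux' {A B s u v : ℝ} (hA : 0 < A) (h4 : s ^ 2 ≤ 4 * A * B)
    (hu : 0 ≤ u) (hv : 0 ≤ v) :
    s * u * v ≤ A * u ^ 2 + B * v ^ 2 := by
  nlinarith [sq_nonneg (2 * A * u - s * v), mul_nonneg (sub_nonneg.2 h4) (sq_nonneg v)]

/-- Tangent-line lower bound for a function with second derivative bounded below. -/
private lemma quad_tangent_lower' {P : ℝ → ℝ} (hPd : Differentiable ℝ P)
    (hPd2 : Differentiable ℝ (deriv P)) {lo hi m : ℝ}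
    (hm : ∀ r ∈ Icc lo hi, 2 * m ≤ deriv (deriv P) r)
    {x y : ℝ} (hx : x ∈ Icc lo hi) (hy : y ∈ Icc lo hi) :
    P x + deriv P x * (y - x) + m * (y - x) ^ 2 ≤ P y := by
  set Q : ℝ → ℝ := fun r => P r - m * r ^ 2 with hQdef
  have hq : ∀ t, Q t = P t - m * t ^ 2 := fun t => rfl
  have hQdiff : Differentiable ℝ Q := hPd.sub (by fun_prop)
  have hQderiv : deriv Q = fun r => deriv P r - 2 * m * r := by
    funext r
    have h1 : HasDerivAt (fun r : ℝ => m * r ^ 2) (m * (2 * r ^ 1)) r :=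
      (hasDerivAt_pow 2 r).const_mul m
    have h2 : HasDerivAt Q (deriv P r - m * (2 * r ^ 1)) r :=
      ((hPd r).hasDerivAt.sub h1)
    rw [h2.deriv]; ring
  have hQderiv2 : ∀ r, deriv (deriv Q) r = deriv (deriv P) r - 2 * m := by
    intro r
    rw [hQderiv]
    have h1 : HasDerivAt (fun r : ℝ => 2 * m * r) (2 * m) r := by
      simpa using (hasDerivAt_id r).const_mul (2 * m)
    have h2 : HasDerivAt (fun r => deriv P r - 2 * m * r) (deriv (deriv P) r - 2 * m) r :=
      (hPd2 r).hasDerivAt.sub h1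
    exact h2.deriv
  have hconv : ConvexOn ℝ (Icc lo hi) Q := by
    refine convexOn_of_deriv2_nonneg (convex_Icc lo hi) hQdiff.continuous.continuousOn
      hQdiff.differentiableOn ?_ ?_
    · rw [hQderiv]
      exact (hPd2.sub (by fun_prop)).differentiableOn
    · intro r hr
      have hr' : r ∈ Icc lo hi := interior_subset hr
      have h2 : deriv^[2] Q r = deriv (deriv Q) r := by
        simp [Function.iterate_succ_apply']
      rw [h2, hQderiv2]
      linarith [hm r hr']
  rcases lt_trichotomy x y with hxy | heq | hyx
  · have h1 := hconv.deriv_le_slope hx hy hxy hQdiff.differentiableAt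
    rw [slope_def_field] at h1
    have h2 : deriv Q x * (y - x) ≤ Q y - Q x := (le_div_iff₀ (sub_pos.2 hxy)).mp h1
    rw [hq y, hq x, hQderiv] at h2
    simp only at h2
    nlinarith [h2]
  · subst heq; simp
  · have h1 := hconv.slope_le_deriv hy hx hyx hQdiff.differentiableAt
    rw [slope_def_field] at h1
    have h2 : Q x - Q y ≤ deriv Q x * (x - y) := (div_le_iff₀ (sub_pos.2 hyx)).mp h1
    rw [hq y, hq x, hQderiv] at h2
    simp only at h2
    nlinarith [h2]

/-- Tangent-line upper bound for a function with second derivative bounded above. -/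
private lemma quad_tangent_upper' {P : ℝ → ℝ} (hPd : Differentiable ℝ P)
    (hPd2 : Differentiable ℝ (deriv P)) {lo hi m : ℝ}
    (hm : ∀ r ∈ Icc lo hi, deriv (deriv P) r ≤ 2 * m)
    {x y : ℝ} (hx : x ∈ Icc lo hi) (hy : y ∈ Icc lo hi) :
    P y ≤ P x + deriv P x * (y - x) + m * (y - x) ^ 2 := by
  have hneg : deriv (fun r => -P r) = fun r => -deriv P r := by
    funext r; exact deriv.neg
  have hPd' : Differentiable ℝ (fun r => -P r) := hPd.neg
  have hPd2' : Differentiable ℝ (deriv (fun r => -P r)) := by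
    rw [hneg]; exact hPd2.neg
  have hm' : ∀ r ∈ Icc lo hi, 2 * (-m) ≤ deriv (deriv (fun r => -P r)) r := by
    intro r hr
    have h2 : deriv (deriv (fun r => -P r)) r = -deriv (deriv P) r := by
      rw [hneg]; exact deriv.neg
    rw [h2]; linarith [hm r hr]
  have := quad_tangent_lower' hPd' hPd2' hm' hx hy
  rw [hneg] at this
  simp only at this
  nlinarith [this]

/-- Core coercivity estimate for the quadratic form of the relative energy. -/
private lemma core_coercive' (s rlo rhi c : ℝ) (hs : 0 < s) (hrlo : 0 < rlo) (hrr : rlo ≤ rhi)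
    (hc : c = min (s ^ 2 * rlo / (24 * s ^ 2 + 6 * rhi * rlo))
      (2 * s ^ 2 * rlo ^ 2 / (rhi * (4 * s ^ 2 + rhi ^ 2))))
    (ρ ρh u v : ℝ) (hρ1 : rlo ≤ ρ) (hρ2 : ρ ≤ rhi) (hρh1 : rlo ≤ ρh) (hρh2 : ρh ≤ rhi)
    (hu : u = |ρ - ρh|) (hv0 : 0 ≤ v) (hv2 : v ≤ 2 * s) :
    c * (u ^ 2 + v ^ 2) ≤ 2 * s ^ 2 / max ρ ρh * u ^ 2 + ρ / 2 * v ^ 2 - s * u * v := by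
  have hrhi : 0 < rhi := lt_of_lt_of_le hrlo hrr
  have hcpos : 0 < c := by rw [hc]; apply lt_min <;> positivity
  have hc0 : 0 ≤ c := hcpos.le
  have hc1 : c * (24 * s ^ 2 + 6 * rhi * rlo) ≤ s ^ 2 * rlo := by
    have h := min_le_left (s ^ 2 * rlo / (24 * s ^ 2 + 6 * rhi * rlo))
      (2 * s ^ 2 * rlo ^ 2 / (rhi * (4 * s ^ 2 + rhi ^ 2)))
    rw [← hc] at h
    exact (le_div_iff₀ (by positivity)).mp h
  have hc2 : c * (rhi * (4 * s ^ 2 + rhi ^ 2)) ≤ 2 * s ^ 2 * rlo ^ 2 := by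
    have h := min_le_right (s ^ 2 * rlo / (24 * s ^ 2 + 6 * rhi * rlo))
      (2 * s ^ 2 * rlo ^ 2 / (rhi * (4 * s ^ 2 + rhi ^ 2)))
    rw [← hc] at h
    exact (le_div_iff₀ (by positivity)).mp h
  have hcrlo : c ≤ rlo / 24 := by
    nlinarith [mul_pos hs hs, mul_nonneg hc0 (mul_nonneg hrhi.le hrlo.le)]
  have hρpos : 0 < ρ := lt_of_lt_of_le hrlo hρ1
  have hu0 : 0 ≤ u := hu ▸ abs_nonneg _
  have hurhi : u ≤ rhi := by
    rw [hu, abs_le]; constructor <;> linarith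
  rcases le_or_gt ρh (3 * ρ) with hcase | hcase
  · -- Case A : ρ̂ ≤ 3ρ, the quadratic form is positive definite with margin
    set M := max ρ ρh with hM
    have hM1 : ρ ≤ M := le_max_left _ _
    have hM3 : M ≤ 3 * ρ := max_le (by linarith) hcase
    have hM4 : M ≤ rhi := max_le hρ2 hρh2
    have hMpos : 0 < M := lt_of_lt_of_le hρpos hM1
    have hMlo : rlo ≤ M := hρ1.trans hM1
    set A := 2 * s ^ 2 / M with hA
    have hAM : A * M = 2 * s ^ 2 := div_mul_cancel₀ _ hMpos.ne'
    have hApos : 0 < A := by positivity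
    have key1 : 2 * s ^ 2 ≤ A * (3 * ρ) :=
      hAM ▸ mul_le_mul_of_nonneg_left hM3 hApos.le
    set A2 := 2 * s ^ 2 / rlo with hA2
    have hA2rlo : A2 * rlo = 2 * s ^ 2 := div_mul_cancel₀ _ hrlo.ne'
    have hAle : A ≤ A2 := div_le_div_of_nonneg_left (by positivity) hrlo hMlo
    have hkey3 : (4 * c * A2 + 2 * c * rhi) * rlo ≤ s ^ 2 / 3 * rlo := by
      have h1 : 4 * c * A2 * rlo = 8 * (c * s ^ 2) := by
        calc 4 * c * A2 * rlo = 4 * c * (A2 * rlo) := by ring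
          _ = 8 * (c * s ^ 2) := by rw [hA2rlo]; ring
      nlinarith [hc1]
    have hkey3' : 4 * c * A2 + 2 * c * rhi ≤ s ^ 2 / 3 :=
      le_of_mul_le_mul_right (by linarith [hkey3]) hrlo
    have hcA : c * A ≤ c * A2 := mul_le_mul_of_nonneg_left hAle hc0
    have hcρ : c * ρ ≤ c * rhi := mul_le_mul_of_nonneg_left hρ2 hc0
    have h4AB : s ^ 2 ≤ 4 * (A - c) * (ρ / 2 - c) := by
      linarith [key1, hcA, hcρ, hkey3', sq_nonneg c]
    have hcrhi6 : c * rhi * (6 * rlo) ≤ s ^ 2 / 6 * (6 * rlo) := by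
      nlinarith [mul_nonneg hc0 (sq_nonneg s)]
    have hcrhi : c * rhi ≤ s ^ 2 / 6 := le_of_mul_le_mul_right hcrhi6 (by positivity)
    have hArhi : A * M ≤ A * rhi := mul_le_mul_of_nonneg_left hM4 hApos.le
    have hAcrhi : 2 * s ^ 2 - s ^ 2 / 6 ≤ (A - c) * rhi := by
      have h5 : 2 * s ^ 2 ≤ A * rhi := hAM ▸ hArhi
      linarith [hcrhi]
    have hA' : 0 < A - c := by nlinarith [hAcrhi, mul_pos hs hs, hrhi]
    have hpsd := psd_aux' hA' h4AB hu0 hv0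
    linarith [hpsd]
  · -- Case B : ρ̂ > 3ρ
    have hρρh : ρ < ρh := by linarith
    have hMeq : max ρ ρh = ρh := max_eq_right hρρh.le
    have hu' : u = ρh - ρ := by rw [hu, abs_sub_comm, abs_of_nonneg (by linarith)]
    subst hu'
    rw [hMeq]
    have hρhpos : 0 < ρh := by linarith
    have hDρh' : (2 * s ^ 2 / ρh) * ρh = 2 * s ^ 2 := div_mul_cancel₀ _ hρhpos.ne'
    have hDpos' : 0 < 2 * s ^ 2 / ρh := by positivity
    obtain ⟨D, hDef⟩ : ∃ D, 2 * s ^ 2 / ρh = D := ⟨_, rfl⟩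
    rw [hDef] at hDρh' hDpos' ⊢
    have hDρh : D * ρh = 2 * s ^ 2 := hDρh'
    have hDpos : 0 < D := hDpos'
    have hu2ρ : 2 * ρ < ρh - ρ := by linarith
    have step1 : 0 ≤ (2 * s - v) * (s * (ρh - ρ) - (ρ / 2 - c) * (v + 2 * s)) := by
      apply mul_nonneg (by linarith)
      have h1 : (ρ / 2 - c) * (v + 2 * s) ≤ ρ / 2 * (4 * s) := by
        apply mul_le_mul (by linarith) (by linarith) (by linarith) (by linarith)
      nlinarith [mul_pos hs (show (0:ℝ) < ρh - ρ - 2 * ρ by linarith)]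
    have hq2s : 0 ≤ D * ρ ^ 2 - 4 * c * s ^ 2 - c * (ρh - ρ) ^ 2 := by
      have hDrhi : 2 * s ^ 2 ≤ D * rhi := by
        calc 2 * s ^ 2 = D * ρh := hDρh.symm
          _ ≤ D * rhi := mul_le_mul_of_nonneg_left hρh2 hDpos.le
      have h1 : 2 * s ^ 2 * rlo ^ 2 ≤ D * ρ ^ 2 * rhi := by
        have hrsq : rlo ^ 2 ≤ ρ ^ 2 := by nlinarith
        nlinarith [mul_le_mul_of_nonneg_left hrsq hDpos.le, mul_pos hDpos (mul_pos hρpos hρpos)]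
      have h2 : c * (ρh - ρ) ^ 2 * rhi ≤ c * rhi ^ 2 * rhi := by
        have h3 : (ρh - ρ) ^ 2 ≤ rhi ^ 2 := by nlinarith
        have h4 := mul_le_mul_of_nonneg_left h3 hc0
        nlinarith [h4]
      nlinarith [hc2, mul_pos hrhi hrhi]
    have hzero : D * ρh - 2 * s ^ 2 = 0 := by linarith
    calc c * ((ρh - ρ) ^ 2 + v ^ 2)
        ≤ c * ((ρh - ρ) ^ 2 + v ^ 2)
          + (2 * s - v) * (s * (ρh - ρ) - (ρ / 2 - c) * (v + 2 * s))
          + (D * ρ ^ 2 - 4 * c * s ^ 2 - c * (ρh - ρ) ^ 2) := by linarith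
      _ = D * (ρh - ρ) ^ 2 + ρ / 2 * v ^ 2 - s * (ρh - ρ) * v
          - (ρh - 2 * ρ) * (D * ρh - 2 * s ^ 2) := by ring
      _ = D * (ρh - ρ) ^ 2 + ρ / 2 * v ^ 2 - s * (ρh - ρ) * v := by rw [hzero]; ring

end AuxLemmas

/-- The relative energy `H(u|û) = H(u) − H(û) − ⟨H'(û), u − û⟩` of the rescaled
barotropic gas flow system, with energy
`H(ρ,w) = ∫₀^ℓ a (ε² ρ w²/2 + P(ρ) + g z ρ) dx`. -/
noncomputable def relEnergy (ℓ g ε : ℝ) (a z P : ℝ → ℝ) (ρ w ρh wh : ℝ → ℝ) : ℝ :=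
  ∫ x in (0:ℝ)..ℓ,
    (a x * (ε ^ 2 * ρ x * (w x) ^ 2 / 2 + P (ρ x) + g * z x * ρ x)
      - a x * (ε ^ 2 * ρh x * (wh x) ^ 2 / 2 + P (ρh x) + g * z x * ρh x)
      - (a x * (ε ^ 2 * (wh x) ^ 2 / 2 + deriv P (ρh x) + g * z x) * (ρ x - ρh x)
          + a x * ε ^ 2 * ρh x * wh x * (w x - wh x)))

/-- The squared weighted norm `‖√a(ρ−ρ̂)‖²_{L²(0,ℓ)} + ‖ε(w−ŵ)‖²_{L²(0,ℓ)}`. -/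
noncomputable def weightedNormSq (ℓ ε : ℝ) (a : ℝ → ℝ) (ρ w ρh wh : ℝ → ℝ) : ℝ :=
  (∫ x in (0:ℝ)..ℓ, a x * (ρ x - ρh x) ^ 2)
    + ∫ x in (0:ℝ)..ℓ, ε ^ 2 * (w x - wh x) ^ 2

/-- under assumptions (A1)–(A2) the relative energy is equivalent,
uniformly over all admissible states, to the squared weighted `L²` distance:
`ĉ₀(‖√a(ρ−ρ̂)‖²_{L²} + ‖ε(w−ŵ)‖²_{L²}) ≤ H(u|û) ≤ Ĉ₀(‖√a(ρ−ρ̂)‖²_{L²} + ‖ε(w−ŵ)‖²_{L²})`. -/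
theorem relative_energy_norm_equivalence
    (ℓ g : ℝ) (hℓ : 0 < ℓ)
    (P : ℝ → ℝ) (hP : ContDiff ℝ (⊤ : ℕ∞) P) (hPconv : StrictConvexOn ℝ (Set.Ioi 0) P)
    (rlo rhi wbar εbar alo ahi gzbar : ℝ)
    (hrlo : 0 < rlo) (hrr : rlo ≤ rhi) (hwbar : 0 < wbar) (hεbar : 0 < εbar)
    (halo : 0 < alo) (haa : alo ≤ ahi)
    (hA1 : ∀ r ∈ Set.Icc rlo rhi, 4 * εbar ^ 2 * wbar ^ 2 ≤ r * deriv (deriv P) r) :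
    ∃ c0 C0 : ℝ, 0 < c0 ∧ 0 < C0 ∧
      ∀ (a z : ℝ → ℝ) (ε : ℝ) (ρ w ρh wh : ℝ → ℝ),
        Continuous a → Continuous z →
        Continuous ρ → Continuous w → Continuous ρh → Continuous wh →
        (∀ x, alo ≤ a x ∧ a x ≤ ahi) → (∀ x, |g * z x| ≤ gzbar) →
        0 ≤ ε → ε ≤ εbar →
        (∀ x ∈ Set.Icc (0:ℝ) ℓ,
          rlo ≤ ρ x ∧ ρ x ≤ rhi ∧ rlo ≤ ρh x ∧ ρh x ≤ rhi
            ∧ |w x| ≤ wbar ∧ |wh x| ≤ wbar) →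
        c0 * weightedNormSq ℓ ε a ρ w ρh wh
            ≤ relEnergy ℓ g ε a z P ρ w ρh wh
          ∧ relEnergy ℓ g ε a z P ρ w ρh wh
            ≤ C0 * weightedNormSq ℓ ε a ρ w ρh wh := by
  -- regularity of P
  have h1P := contDiff_infty_iff_deriv.mp (hP.of_le (by simp))
  have h2P := contDiff_infty_iff_deriv.mp h1P.2
  have hPd : Differentiable ℝ P := h1P.1
  have hPd2 : Differentiable ℝ (deriv P) := h2P.1
  have hPdc : Continuous (deriv P) := h1P.2.continuous
  have hPc2 : Continuous (deriv (deriv P)) := h2P.2.continuous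
  have hPcont : Continuous P := hP.continuous
  have hrhi : 0 < rhi := lt_of_lt_of_le hrlo hrr
  have hahi : 0 < ahi := lt_of_lt_of_le halo haa
  -- uniform bound on P'' on [rlo, rhi]
  obtain ⟨PM, hPM⟩ := isCompact_Icc.exists_bound_of_continuousOn
    (s := Set.Icc rlo rhi) hPc2.continuousOn
  have hPM0 : 0 ≤ PM := le_trans (norm_nonneg _) (hPM rlo ⟨le_refl _, hrr⟩)
  obtain ⟨s, hsdef⟩ : ∃ s : ℝ, s = εbar * wbar := ⟨_, rfl⟩
  have hs : 0 < s := hsdef ▸ mul_pos hεbar hwbar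
  obtain ⟨c, hcdef⟩ : ∃ c : ℝ, c = min (s ^ 2 * rlo / (24 * s ^ 2 + 6 * rhi * rlo))
      (2 * s ^ 2 * rlo ^ 2 / (rhi * (4 * s ^ 2 + rhi ^ 2))) := ⟨_, rfl⟩
  have hcpos : 0 < c := by rw [hcdef]; apply lt_min <;> positivity
  obtain ⟨c0, hc0def⟩ : ∃ c0 : ℝ, c0 = min c (c * alo) := ⟨_, rfl⟩
  obtain ⟨C0, hC0def⟩ : ∃ C0 : ℝ, C0 = (PM / 2 + s / 2) + (rhi / 2 + s / 2) * ahi := ⟨_, rfl⟩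
  have hc0pos : 0 < c0 := hc0def ▸ lt_min hcpos (mul_pos hcpos halo)
  have hC0pos : 0 < C0 := by
    have h1 : 0 < PM / 2 + s / 2 := by linarith
    have h2 : 0 < (rhi / 2 + s / 2) * ahi := mul_pos (by linarith) hahi
    rw [hC0def]; linarith
  refine ⟨c0, C0, hc0pos, hC0pos, ?_⟩
  intro a z ε ρ w ρh wh ha hz hρ hw hρh hwh haB hgz hε0 hεεb hadm
  -- pointwise bounds on the integrand
  have hLow : ∀ x ∈ Set.Icc (0:ℝ) ℓ,
      c0 * (a x * (ρ x - ρh x) ^ 2 + ε ^ 2 * (w x - wh x) ^ 2)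
        ≤ (a x * (ε ^ 2 * ρ x * (w x) ^ 2 / 2 + P (ρ x) + g * z x * ρ x)
          - a x * (ε ^ 2 * ρh x * (wh x) ^ 2 / 2 + P (ρh x) + g * z x * ρh x)
          - (a x * (ε ^ 2 * (wh x) ^ 2 / 2 + deriv P (ρh x) + g * z x) * (ρ x - ρh x)
              + a x * ε ^ 2 * ρh x * wh x * (w x - wh x)))
      ∧ (a x * (ε ^ 2 * ρ x * (w x) ^ 2 / 2 + P (ρ x) + g * z x * ρ x)
          - a x * (ε ^ 2 * ρh x * (wh x) ^ 2 / 2 + P (ρh x) + g * z x * ρh x)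
          - (a x * (ε ^ 2 * (wh x) ^ 2 / 2 + deriv P (ρh x) + g * z x) * (ρ x - ρh x)
              + a x * ε ^ 2 * ρh x * wh x * (w x - wh x)))
        ≤ C0 * (a x * (ρ x - ρh x) ^ 2 + ε ^ 2 * (w x - wh x) ^ 2) := by
    intro x hx
    obtain ⟨h1, h2, h3, h4, h5, h6⟩ := hadm x hx
    obtain ⟨ha1, ha2⟩ := haB x
    have ha0 : 0 ≤ a x := le_trans halo.le ha1
    obtain ⟨X, hXdef⟩ : ∃ X : ℝ, ρ x - ρh x = X := ⟨_, rfl⟩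
    obtain ⟨Y, hYdef⟩ : ∃ Y : ℝ, w x - wh x = Y := ⟨_, rfl⟩
    obtain ⟨M, hMdef⟩ : ∃ M : ℝ, max (ρ x) (ρh x) = M := ⟨_, rfl⟩
    have hM1 : ρ x ≤ M := hMdef ▸ le_max_left _ _
    have hM2 : ρh x ≤ M := hMdef ▸ le_max_right _ _
    have hMhi : M ≤ rhi := hMdef ▸ max_le h2 h4
    have hMlo : rlo ≤ M := le_trans h1 hM1
    have hMpos : 0 < M := lt_of_lt_of_le hrlo hMlo
    -- lower bound for the pressure part
    have hm : ∀ r ∈ Set.Icc rlo M, 2 * (2 * s ^ 2 / M) ≤ deriv (deriv P) r := by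
      intro r hr
      have hr' : r ∈ Set.Icc rlo rhi := ⟨hr.1, hr.2.trans hMhi⟩
      have hA := hA1 r hr'
      have hrpos : 0 < r := lt_of_lt_of_le hrlo hr.1
      have hwε : 0 < 4 * εbar ^ 2 * wbar ^ 2 := by positivity
      have h0 : 0 < r * deriv (deriv P) r := lt_of_lt_of_le hwε hA
      have hP2pos : 0 ≤ deriv (deriv P) r := by nlinarith [h0, hrpos]
      have he : 2 * (2 * s ^ 2 / M) = 4 * s ^ 2 / M := by ring
      rw [he, div_le_iff₀ hMpos]
      have he2 : (4:ℝ) * s ^ 2 = 4 * εbar ^ 2 * wbar ^ 2 := by rw [hsdef]; ring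
      rw [he2]
      calc 4 * εbar ^ 2 * wbar ^ 2 ≤ r * deriv (deriv P) r := hA
        _ ≤ M * deriv (deriv P) r := mul_le_mul_of_nonneg_right hr.2 hP2pos
        _ = deriv (deriv P) r * M := by ring
    have hrelPlow := quad_tangent_lower' hPd hPd2 hm ⟨h3, hM2⟩ ⟨h1, hM1⟩
    rw [hXdef] at hrelPlow
    -- upper bound for the pressure part
    have hmu : ∀ r ∈ Set.Icc rlo rhi, deriv (deriv P) r ≤ 2 * (PM / 2) := by
      intro r hr
      have := hPM r hr
      rw [Real.norm_eq_abs] at this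
      have := (abs_le.mp this).2
      linarith
    have hrelPup := quad_tangent_upper' hPd hPd2 hmu ⟨h3, h4⟩ ⟨h1, h2⟩
    rw [hXdef] at hrelPup
    -- bound on the cross term
    have hY2 : |Y| ≤ 2 * wbar := by
      have h7 := abs_sub (w x) (wh x)
      rw [hYdef] at h7; linarith
    have hvle : ε * |Y| ≤ 2 * s := by
      calc ε * |Y| ≤ εbar * (2 * wbar) :=
            mul_le_mul hεεb hY2 (abs_nonneg _) hεbar.le
        _ = 2 * s := by rw [hsdef]; ring
    have hcross : |ε ^ 2 * wh x * X * Y| ≤ s * (|X| * (ε * |Y|)) := by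
      have e1 : |ε ^ 2 * wh x * X * Y| = (ε * |wh x|) * (|X| * (ε * |Y|)) := by
        rw [abs_mul, abs_mul, abs_mul, abs_pow, abs_of_nonneg hε0]
        ring
      rw [e1]
      apply mul_le_mul_of_nonneg_right _ (by positivity)
      calc ε * |wh x| ≤ εbar * wbar := mul_le_mul hεεb h6 (abs_nonneg _) hεbar.le
        _ = s := hsdef.symm
    have hcross1 : -(s * (|X| * (ε * |Y|))) ≤ ε ^ 2 * wh x * X * Y := (abs_le.mp hcross).1
    have hcross2 : ε ^ 2 * wh x * X * Y ≤ s * (|X| * (ε * |Y|)) := (abs_le.mp hcross).2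
    have hcore := core_coercive' s rlo rhi c hs hrlo hrr hcdef (ρ x) (ρh x) |X| (ε * |Y|)
      h1 h2 h3 h4 (by rw [hXdef]) (by positivity) hvle
    rw [hMdef] at hcore
    have e2 : |X| ^ 2 = X ^ 2 := sq_abs X
    have e3 : (ε * |Y|) ^ 2 = ε ^ 2 * Y ^ 2 := by rw [mul_pow, sq_abs]
    rw [e2, e3] at hcore
    -- the relative energy integrand as a quadratic quantity
    have hT : c * (X ^ 2 + ε ^ 2 * Y ^ 2)
        ≤ (P (ρ x) - P (ρh x) - deriv P (ρh x) * X)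
          + ε ^ 2 * ρ x * Y ^ 2 / 2 + ε ^ 2 * wh x * X * Y := by
      have hk1 : s * |X| * (ε * |Y|) = s * (|X| * (ε * |Y|)) := by ring
      rw [hk1] at hcore
      linarith [hrelPlow, hcross1, hcore]
    have hTup : (P (ρ x) - P (ρh x) - deriv P (ρh x) * X)
          + ε ^ 2 * ρ x * Y ^ 2 / 2 + ε ^ 2 * wh x * X * Y
        ≤ (PM / 2 + s / 2) * X ^ 2 + (rhi / 2 + s / 2) * (ε ^ 2 * Y ^ 2) := by
      have hamgm : 2 * |X| * (ε * |Y|) ≤ |X| ^ 2 + (ε * |Y|) ^ 2 := two_mul_le_add_sq _ _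
      rw [e2, e3] at hamgm
      have hkin : ε ^ 2 * ρ x * Y ^ 2 / 2 ≤ rhi / 2 * (ε ^ 2 * Y ^ 2) := by
        have hY2n : 0 ≤ ε ^ 2 * Y ^ 2 := by positivity
        linarith [mul_le_mul_of_nonneg_left h2 hY2n]
      linarith [hrelPup, hcross2, hkin, mul_le_mul_of_nonneg_left hamgm hs.le]
    constructor
    · -- lower bound
      have hTa := mul_le_mul_of_nonneg_left hT ha0
      have hid : a x * ((P (ρ x) - P (ρh x) - deriv P (ρh x) * X)
            + ε ^ 2 * ρ x * Y ^ 2 / 2 + ε ^ 2 * wh x * X * Y)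
          = (a x * (ε ^ 2 * ρ x * (w x) ^ 2 / 2 + P (ρ x) + g * z x * ρ x)
          - a x * (ε ^ 2 * ρh x * (wh x) ^ 2 / 2 + P (ρh x) + g * z x * ρh x)
          - (a x * (ε ^ 2 * (wh x) ^ 2 / 2 + deriv P (ρh x) + g * z x) * (ρ x - ρh x)
              + a x * ε ^ 2 * ρh x * wh x * (w x - wh x))) := by
        rw [← hXdef, ← hYdef]; ring
      rw [show (ρ x - ρh x) ^ 2 = X ^ 2 by rw [hXdef],
        show (w x - wh x) ^ 2 = Y ^ 2 by rw [hYdef], ← hid]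
      have f1 : 0 ≤ (c - c0) * a x * X ^ 2 := by
        apply mul_nonneg (mul_nonneg _ ha0) (sq_nonneg _)
        have := min_le_left c (c * alo)
        rw [hc0def]; linarith
      have f2 : 0 ≤ (a x - alo) * (c * (ε ^ 2 * Y ^ 2)) := by
        apply mul_nonneg (by linarith) (mul_nonneg hcpos.le (by positivity))
      have f3 : 0 ≤ (c * alo - c0) * (ε ^ 2 * Y ^ 2) := by
        apply mul_nonneg _ (by positivity)
        have := min_le_right c (c * alo)
        rw [hc0def]; linarith
      linarith [hTa, f1, f2, f3]
    · -- upper bound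
      have hTa := mul_le_mul_of_nonneg_left hTup ha0
      have hid : a x * ((P (ρ x) - P (ρh x) - deriv P (ρh x) * X)
            + ε ^ 2 * ρ x * Y ^ 2 / 2 + ε ^ 2 * wh x * X * Y)
          = (a x * (ε ^ 2 * ρ x * (w x) ^ 2 / 2 + P (ρ x) + g * z x * ρ x)
          - a x * (ε ^ 2 * ρh x * (wh x) ^ 2 / 2 + P (ρh x) + g * z x * ρh x)
          - (a x * (ε ^ 2 * (wh x) ^ 2 / 2 + deriv P (ρh x) + g * z x) * (ρ x - ρh x)
              + a x * ε ^ 2 * ρh x * wh x * (w x - wh x))) := by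
        rw [← hXdef, ← hYdef]; ring
      rw [show (ρ x - ρh x) ^ 2 = X ^ 2 by rw [hXdef],
        show (w x - wh x) ^ 2 = Y ^ 2 by rw [hYdef], ← hid]
      have f1 : 0 ≤ (rhi / 2 + s / 2) * (ahi - a x) * (ε ^ 2 * Y ^ 2) := by
        apply mul_nonneg (mul_nonneg (by linarith) (by linarith)) (by positivity)
      have f2 : 0 ≤ (rhi / 2 + s / 2) * ahi * (a x * X ^ 2) := by
        apply mul_nonneg (mul_nonneg (by linarith) hahi.le)
          (mul_nonneg ha0 (sq_nonneg _))
      have f3 : 0 ≤ (PM / 2 + s / 2) * (ε ^ 2 * Y ^ 2) := by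
        apply mul_nonneg (by linarith) (by positivity)
      rw [hC0def]
      linarith [hTa, f1, f2, f3]
  -- continuity and integrability
  have hcont1 : Continuous fun x => a x * (ρ x - ρh x) ^ 2 := by fun_prop
  have hcont2 : Continuous fun x => ε ^ 2 * (w x - wh x) ^ 2 := by fun_prop
  have hFcont : Continuous fun x =>
      (a x * (ε ^ 2 * ρ x * (w x) ^ 2 / 2 + P (ρ x) + g * z x * ρ x)
      - a x * (ε ^ 2 * ρh x * (wh x) ^ 2 / 2 + P (ρh x) + g * z x * ρh x)
      - (a x * (ε ^ 2 * (wh x) ^ 2 / 2 + deriv P (ρh x) + g * z x) * (ρ x - ρh x)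
          + a x * ε ^ 2 * ρh x * wh x * (w x - wh x))) := by fun_prop
  have hGc : Continuous fun x =>
      a x * (ρ x - ρh x) ^ 2 + ε ^ 2 * (w x - wh x) ^ 2 := hcont1.add hcont2
  have hwns : weightedNormSq ℓ ε a ρ w ρh wh
      = ∫ x in (0:ℝ)..ℓ, (a x * (ρ x - ρh x) ^ 2 + ε ^ 2 * (w x - wh x) ^ 2) := by
    rw [weightedNormSq,
      intervalIntegral.integral_add (hcont1.intervalIntegrable 0 ℓ)
        (hcont2.intervalIntegrable 0 ℓ)]
  constructor
  · rw [hwns, relEnergy, ← intervalIntegral.integral_const_mul]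
    exact intervalIntegral.integral_mono_on hℓ.le
      ((continuous_const.mul hGc).intervalIntegrable 0 ℓ) (hFcont.intervalIntegrable 0 ℓ)
      (fun x hx => (hLow x hx).1)
  · rw [hwns, relEnergy, ← intervalIntegral.integral_const_mul]
    exact intervalIntegral.integral_mono_on hℓ.le
      (hFcont.intervalIntegrable 0 ℓ) ((continuous_const.mul hGc).intervalIntegrable 0 ℓ)
      (fun x hx => (hLow x hx).2)
end

section
/- For all real numbers ρ, ρ̂, w, ŵ with ρ̂ > 0, the friction-term integrand satisfies the pointwise lower bound (|w|w − |ŵ|ŵ)(ρw − ρ̂ŵ) ≥ (ρ̂ (|w| + |ŵ|)/8) (w − ŵ)² − (|w| + |ŵ|) (|w|²/ρ̂) (ρ − ρ̂)². -/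
/-!
Write `ρw - ρ̂ŵ = ρ̂(w - ŵ) + w(ρ - ρ̂)`. The map `x ↦ |x|x` is strongly monotone with modulus
`(|w| + |ŵ|)/2` and Lipschitz with constant `|w| + |ŵ|` on `{w, ŵ}`, so the first part contributes
at least `ρ̂(|w| + |ŵ|)/2 · (w - ŵ)²`, while the cross term is at most
`(|w| + |ŵ|)|w - ŵ||w||ρ - ρ̂|`, which Young's inequality splits into `ρ̂/4 · (w - ŵ)²` and
`w²(ρ - ρ̂)²/ρ̂`.
-/

theorem half_abs_add_abs_mul_sq_sub_le (x y : ℝ) :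
    (|x| + |y|) / 2 * (x - y) ^ 2 ≤ (|x| * x - |y| * y) * (x - y) := by
  rcases abs_cases x with ⟨hx, _⟩ | ⟨hx, _⟩ <;> rcases abs_cases y with ⟨hy, _⟩ | ⟨hy, _⟩ <;>
    rw [hx, hy] <;> nlinarith [sq_nonneg (x - y), sq_nonneg (x + y)]

theorem abs_abs_mul_self_sub_le (x y : ℝ) :
    |(|x| * x - |y| * y)| ≤ (|x| + |y|) * |x - y| := by
  rcases abs_cases x with ⟨hx, _⟩ | ⟨hx, _⟩ <;> rcases abs_cases y with ⟨hy, _⟩ | ⟨hy, _⟩ <;>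
    rcases abs_cases (x - y) with ⟨hxy, _⟩ | ⟨hxy, _⟩ <;> rw [hx, hy, hxy, abs_le] <;>
    constructor <;> nlinarith

theorem mul_le_div_four_mul_sq_add_sq_div {a b c : ℝ} (hc : 0 < c) :
    a * b ≤ c / 4 * a ^ 2 + b ^ 2 / c := by
  rw [← sub_nonneg]
  have key : c / 4 * a ^ 2 + b ^ 2 / c - a * b = (c * a / 2 - b) ^ 2 / c := by
    field_simp
    ring
  rw [key]
  positivity

/-- pointwise lower bound for the friction-term integrand
`(|w|w − |ŵ|ŵ)(ρw − ρ̂ŵ)`. -/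
theorem friction_integrand_pointwise_lower_bound
    (ρ ρh w wh : ℝ) (hρh : 0 < ρh) :
    ρh * (|w| + |wh|) / 8 * (w - wh) ^ 2
        - (|w| + |wh|) * (|w| ^ 2 / ρh) * (ρ - ρh) ^ 2
      ≤ (|w| * w - |wh| * wh) * (ρ * w - ρh * wh) := by
  set S := |w| + |wh|
  set A := |w| * w - |wh| * wh
  have hS : 0 ≤ S := by positivity
  have hmono : ρh * (S / 2 * (w - wh) ^ 2) ≤ ρh * (A * (w - wh)) :=
    mul_le_mul_of_nonneg_left (half_abs_add_abs_mul_sq_sub_le w wh) hρh.le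
  have hcross : -(S * |w - wh| * (|w| * |ρ - ρh|)) ≤ A * (w * (ρ - ρh)) := by
    refine neg_le_of_abs_le ?_
    rw [abs_mul, abs_mul]
    exact mul_le_mul_of_nonneg_right (abs_abs_mul_self_sub_le w wh) (by positivity)
  have hyoung :
      |w - wh| * (|w| * |ρ - ρh|) ≤ ρh / 4 * (w - wh) ^ 2 + w ^ 2 * (ρ - ρh) ^ 2 / ρh := by
    simpa [sq_abs, mul_pow] using mul_le_div_four_mul_sq_add_sq_div (a := |w - wh|)
      (b := |w| * |ρ - ρh|) hρh
  calc ρh * S / 8 * (w - wh) ^ 2 - S * (|w| ^ 2 / ρh) * (ρ - ρh) ^ 2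
      ≤ ρh * (S / 2 * (w - wh) ^ 2)
          - S * (ρh / 4 * (w - wh) ^ 2 + w ^ 2 * (ρ - ρh) ^ 2 / ρh) := by
        have gap : ρh * (S / 2 * (w - wh) ^ 2)
            - S * (ρh / 4 * (w - wh) ^ 2 + w ^ 2 * (ρ - ρh) ^ 2 / ρh)
            - (ρh * S / 8 * (w - wh) ^ 2 - S * (|w| ^ 2 / ρh) * (ρ - ρh) ^ 2)
            = ρh * S / 8 * (w - wh) ^ 2 := by
          rw [sq_abs]
          ring
        have : 0 ≤ ρh * S / 8 * (w - wh) ^ 2 := by positivity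
        linarith
    _ ≤ ρh * (A * (w - wh)) + A * (w * (ρ - ρh)) := by
        linarith [mul_le_mul_of_nonneg_left hyoung hS]
    _ = A * (ρ * w - ρh * wh) := by ring
end

section
/- Under assumptions (A1)–(A2), there is a constant C ≥ 0 depending only on the bounds in (A1)–(A2) such that, for any admissible states u = (ρ,w), û = (ρ̂,ŵ) and any time-derivative data ∂_τρ̂, ∂_τŵ ∈ L^∞(0,ℓ), the quadratic remainder term satisfies ∫₀^ℓ a ∂_τρ̂ (P'(ρ|ρ̂) + ε²(w − ŵ)²/2) dx + ∫₀^ℓ ε² ∂_τŵ a (ρ − ρ̂)(w − ŵ) dx ≤ Ĉ₂ H(u|û), where P'(ρ|ρ̂) = P'(ρ) − P'(ρ̂) − P''(ρ̂)(ρ − ρ̂) and Ĉ₂ = C (‖∂_τρ̂‖_{L^∞} + ‖ε ∂_τŵ‖_{L^∞}). -/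
open Set

set_option maxHeartbeats 1000000


private lemma nonneg_cancel {c M : ℝ} (hc : 0 < c) (h : 0 ≤ c * M) : 0 ≤ M :=
  le_of_mul_le_mul_left (by linarith) hc

private lemma slope_mono (g g' : ℝ → ℝ) {lo hi : ℝ}
    (hd : ∀ x ∈ Icc lo hi, HasDerivAt g (g' x) x)
    (h0 : ∀ x ∈ Icc lo hi, 0 ≤ g' x) :
    MonotoneOn g (Icc lo hi) := by
  intro x hx y hy hxy
  rcases eq_or_lt_of_le hxy with rfl | h
  · exact le_refl _
  have hsub : Icc x y ⊆ Icc lo hi := Icc_subset_Icc hx.1 hy.2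
  obtain ⟨c, hc, hceq⟩ := exists_hasDerivAt_eq_slope g g' h
    (fun t ht => (hd t (hsub ht)).continuousAt.continuousWithinAt)
    (fun t ht => hd t (hsub (Ioo_subset_Icc_self ht)))
  have h0c := h0 c (hsub (Ioo_subset_Icc_self hc))
  have hne : y - x ≠ 0 := sub_ne_zero.mpr (ne_of_gt h)
  have heq : g y - g x = g' c * (y - x) := (div_eq_iff hne).mp hceq.symm
  nlinarith [heq]

private lemma bregman (g g' : ℝ → ℝ) {lo hi : ℝ}
    (hd : ∀ x ∈ Icc lo hi, HasDerivAt g (g' x) x)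
    (hmono : MonotoneOn g' (Icc lo hi))
    {x y : ℝ} (hx : x ∈ Icc lo hi) (hy : y ∈ Icc lo hi) :
    0 ≤ g y - g x - g' x * (y - x) := by
  rcases lt_trichotomy x y with h | rfl | h
  · have hsub : Icc x y ⊆ Icc lo hi := Icc_subset_Icc hx.1 hy.2
    obtain ⟨c, hc, hceq⟩ := exists_hasDerivAt_eq_slope g g' h
      (fun t ht => (hd t (hsub ht)).continuousAt.continuousWithinAt)
      (fun t ht => hd t (hsub (Ioo_subset_Icc_self ht)))
    have hmem := hsub (Ioo_subset_Icc_self hc)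
    have hge : g' x ≤ g' c := hmono hx hmem (le_of_lt hc.1)
    have hne : y - x ≠ 0 := sub_ne_zero.mpr (ne_of_gt h)
    have heq : g y - g x = g' c * (y - x) := (div_eq_iff hne).mp hceq.symm
    nlinarith [heq]
  · simp
  · have hsub : Icc y x ⊆ Icc lo hi := Icc_subset_Icc hy.1 hx.2
    obtain ⟨c, hc, hceq⟩ := exists_hasDerivAt_eq_slope g g' h
      (fun t ht => (hd t (hsub ht)).continuousAt.continuousWithinAt)
      (fun t ht => hd t (hsub (Ioo_subset_Icc_self ht)))
    have hmem := hsub (Ioo_subset_Icc_self hc)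
    have hle : g' c ≤ g' x := hmono hmem hx (le_of_lt hc.2)
    have hne : x - y ≠ 0 := sub_ne_zero.mpr (ne_of_gt h)
    have heq : g x - g y = g' c * (x - y) := (div_eq_iff hne).mp hceq.symm
    nlinarith [heq]

private lemma log_le_two_sqrt {t : ℝ} (ht : 0 < t) :
    Real.log t ≤ 2 * (Real.sqrt t - 1) := by
  have hs : 0 < Real.sqrt t := Real.sqrt_pos.mpr ht
  have h1 : Real.log (Real.sqrt t) ≤ Real.sqrt t - 1 := Real.log_le_sub_one_of_pos hs
  have h2 : Real.log t = 2 * Real.log (Real.sqrt t) := by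
    conv_lhs => rw [← Real.sq_sqrt ht.le]
    rw [Real.log_pow]; push_cast; ring
  linarith

-- Case-1 key: for 0 < x, 0 < y ≤ 3x :  (2/15)(x-y)² ≤ x·(x(log x - log y) - x + y)
private lemma case1_log {x y : ℝ} (hx : 0 < x) (hy : 0 < y) (h3 : y ≤ 3 * x) :
    (2/15) * (x - y)^2 ≤ x * (x * (Real.log x - Real.log y) - x + y) := by
  set s := Real.sqrt x with hs
  set t := Real.sqrt y with ht
  have hs2 : s ^ 2 = x := Real.sq_sqrt hx.le
  have ht2 : t ^ 2 = y := Real.sq_sqrt hy.le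
  have hs0 : 0 < s := Real.sqrt_pos.mpr hx
  have ht0 : 0 < t := Real.sqrt_pos.mpr hy
  -- s*(log x - log y) ≥ 2s - 2t
  have hlog : 2 * s - 2 * t ≤ s * (Real.log x - Real.log y) := by
    have h1 : Real.log (y / x) ≤ 2 * (Real.sqrt (y / x) - 1) :=
      log_le_two_sqrt (div_pos hy hx)
    have h2 : Real.log (y / x) = Real.log y - Real.log x := Real.log_div hy.ne' hx.ne'
    have h3' : Real.sqrt (y / x) = t / s := by rw [Real.sqrt_div hy.le]
    rw [h2, h3'] at h1
    have := mul_le_mul_of_nonneg_left h1 hs0.le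
    have hts : s * (t / s) = t := by field_simp
    nlinarith [this]
  -- x(log x - log y) - x + y ≥ (s - t)²  (multiplied by s:  s*... but x = s², so)
  have hmain : (s - t)^2 ≤ x * (Real.log x - Real.log y) - x + y := by
    have h4 := mul_le_mul_of_nonneg_left hlog hs0.le
    -- s*(2s - 2t) ≤ s² (logx - logy) = x(logx - logy)
    nlinarith [h4]
  -- (s+t)² ≤ (15/2) s²  since t² ≤ 3 s²
  have hsum : (s + t)^2 ≤ (15/2) * s^2 := by nlinarith [sq_nonneg (7*s - 4*t)]
  have hfac : (x - y)^2 = (s - t)^2 * (s + t)^2 := by nlinarith [hs2, ht2]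
  nlinarith [mul_le_mul_of_nonneg_left hsum (sq_nonneg (s - t)), sq_nonneg (s - t), hx.le,
    mul_le_mul_of_nonneg_left hmain hx.le]

-- Case-2 slack: 0 < x, 3x ≤ y :  x(7 - 8 log 2) ≤ 2y - 4x(log y - log x)
private lemma case2_log {x y : ℝ} (hx : 0 < x) (h3 : 3 * x ≤ y) :
    x * (7 - 8 * Real.log 2) ≤ 2 * y - 4 * x * (Real.log y - Real.log x) := by
  have hy : 0 < y := by linarith
  have h1 : Real.log (y / (4 * x)) ≤ y / (4 * x) - 1 :=
    Real.log_le_sub_one_of_pos (by positivity)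
  have h2 : Real.log (y / (4 * x)) = Real.log y - (2 * Real.log 2 + Real.log x) := by
    rw [Real.log_div hy.ne' (by positivity), Real.log_mul (by norm_num) hx.ne']
    have : Real.log 4 = 2 * Real.log 2 := by
      rw [show (4:ℝ) = 2 ^ 2 by norm_num, Real.log_pow]; push_cast; ring
    rw [this]
  rw [h2] at h1
  have h4 : y / (4 * x) * (4 * x) = y := by field_simp
  nlinarith [mul_le_mul_of_nonneg_right h1 (by positivity : (0:ℝ) ≤ 4 * x)]

-- T ≥ k·f
private lemma bregman_log (P : ℝ → ℝ) (hP : ContDiff ℝ (⊤ : ℕ∞) P) {k rlo rhi : ℝ}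
    (hrlo : 0 < rlo) (hk : 0 ≤ k)
    (hA : ∀ r ∈ Icc rlo rhi, k ≤ r * deriv (deriv P) r)
    {x y : ℝ} (hx : x ∈ Icc rlo rhi) (hy : y ∈ Icc rlo rhi) :
    k * (y * (Real.log y - Real.log x) - y + x)
      ≤ P y - P x - deriv P x * (y - x) := by
  have hPi : ContDiff ℝ (⊤ : ℕ∞) P := hP.of_le (by simp)
  have hPd : Differentiable ℝ P := hPi.differentiable (by simp)
  have hP' : ContDiff ℝ (⊤ : ℕ∞) (deriv P) := (contDiff_infty_iff_deriv.mp hPi).2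
  have hP'd : Differentiable ℝ (deriv P) := hP'.differentiable (by simp)
  set Q : ℝ → ℝ := fun r => P r - k * (r * Real.log r - r) with hQ
  set Q' : ℝ → ℝ := fun r => deriv P r - k * Real.log r with hQ'
  have hN : ∀ t : ℝ, 0 < t → HasDerivAt (fun r : ℝ => r * Real.log r - r) (Real.log t) t := by
    intro t ht
    have h := ((hasDerivAt_id t).mul (Real.hasDerivAt_log ht.ne')).sub (hasDerivAt_id t)
    refine h.congr_deriv ?_
    simp [ht.ne']
  have hd : ∀ r ∈ Icc rlo rhi, HasDerivAt Q (Q' r) r := by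
    intro r hr
    exact ((hPd r).hasDerivAt).sub ((hN r (lt_of_lt_of_le hrlo hr.1)).const_mul k)
  have hd' : ∀ r ∈ Icc rlo rhi, HasDerivAt Q' (deriv (deriv P) r - k * r⁻¹) r := by
    intro r hr
    exact ((hP'd r).hasDerivAt).sub ((Real.hasDerivAt_log (lt_of_lt_of_le hrlo hr.1).ne').const_mul k)
  have hmono : MonotoneOn Q' (Icc rlo rhi) := by
    apply slope_mono Q' (fun r => deriv (deriv P) r - k * r⁻¹) hd'
    intro r hr
    have hr0 : 0 < r := lt_of_lt_of_le hrlo hr.1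
    have := hA r hr
    rw [sub_nonneg, mul_inv_le_iff₀ hr0]
    linarith [this]
  have hb := bregman Q Q' hd hmono hx hy
  have hlogid : Q y - Q x - Q' x * (y - x)
      = (P y - P x - deriv P x * (y - x))
        - k * (y * (Real.log y - Real.log x) - y + x) := by
    simp only [hQ, hQ']
    ring
  rw [hlogid] at hb
  linarith

/-- pointwise coercivity of the relative-energy integrand. -/
private lemma pointwise_coercive {β rlo rhi : ℝ} (hβ : 0 < β) (hrlo : 0 < rlo) (hrr : rlo ≤ rhi)
    {ρ ρh T Y b : ℝ}
    (hρ : ρ ∈ Icc rlo rhi) (hρh : ρh ∈ Icc rlo rhi)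
    (hT : 4 * β^2 * (ρ * (Real.log ρ - Real.log ρh) - ρ + ρh) ≤ T)
    (hY : |Y| ≤ 2 * β) (hb : |b| ≤ β) :
    min (min (β^2 / (60 * rhi)) (rlo / 62))
      (2 * β^2 * rlo * (7/2 - 4 * Real.log 2) / (4 * β^2 + rhi^2))
      * ((ρ - ρh)^2 + Y^2) ≤ T + ρ * Y^2 / 2 + (ρ - ρh) * b * Y := by
  have hrhi : 0 < rhi := lt_of_lt_of_le hrlo hrr
  have hρ0 : 0 < ρ := lt_of_lt_of_le hrlo hρ.1
  have hρh0 : 0 < ρh := lt_of_lt_of_le hrlo hρh.1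
  have hm2 : 0 < 7/2 - 4 * Real.log 2 := by
    have := Real.log_two_lt_d9
    linarith
  set c₀ := min (min (β^2 / (60 * rhi)) (rlo / 62))
      (2 * β^2 * rlo * (7/2 - 4 * Real.log 2) / (4 * β^2 + rhi^2)) with hc₀
  have hc₀pos : 0 < c₀ := by
    apply lt_min (lt_min (by positivity) (by positivity)) (by positivity)
  have hc1 : 60 * rhi * c₀ ≤ β^2 := by
    have : c₀ ≤ β^2 / (60 * rhi) := le_trans (min_le_left _ _) (min_le_left _ _)
    rw [le_div_iff₀ (by positivity)] at this
    linarith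
  have hc2 : 62 * c₀ ≤ rlo := by
    have : c₀ ≤ rlo / 62 := le_trans (min_le_left _ _) (min_le_right _ _)
    linarith
  have hc3 : c₀ * (4 * β^2 + rhi^2) ≤ 2 * β^2 * rlo * (7/2 - 4 * Real.log 2) := by
    have : c₀ ≤ 2 * β^2 * rlo * (7/2 - 4 * Real.log 2) / (4 * β^2 + rhi^2) := min_le_right _ _
    rw [le_div_iff₀ (by positivity)] at this
    linarith
  have hbb := abs_le.mp hb
  have hYY := abs_le.mp hY
  clear_value c₀
  clear hc₀
  by_cases hcase : ρh ≤ 3 * ρ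
  · -- case 1
    have hf := case1_log hρ0 hρh0 hcase
    have hρT : (8/15) * β^2 * (ρ - ρh)^2 ≤ ρ * T := by
      have h2 := mul_le_mul_of_nonneg_left hT hρ0.le
      nlinarith [mul_le_mul_of_nonneg_left hf (by positivity : (0:ℝ) ≤ 4 * β^2)]
    have key' : 0 ≤ 961 * β^2 * (ρ - ρh)^2 + 900 * ρ^2 * Y^2
        + 1860 * ρ * ((ρ - ρh) * b * Y) := by
      nlinarith [mul_nonneg (by linarith : (0:ℝ) ≤ β + b)
          (sq_nonneg (31 * β * (ρ - ρh) + 30 * ρ * Y)),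
        mul_nonneg (by linarith : (0:ℝ) ≤ β - b)
          (sq_nonneg (31 * β * (ρ - ρh) - 30 * ρ * Y)), hρ0.le]
    have t1 : 1860 * ρ * c₀ * (ρ - ρh)^2 ≤ 31 * β^2 * (ρ - ρh)^2 := by
      have h1 : 60 * ρ * c₀ ≤ 60 * rhi * c₀ := by nlinarith [hρ.2, hc₀pos.le]
      nlinarith [sq_nonneg (ρ - ρh)]
    have t2 : 1860 * ρ * c₀ * Y^2 ≤ 30 * ρ^2 * Y^2 := by
      have h1 : 62 * c₀ ≤ ρ := le_trans hc2 hρ.1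
      have h2 := mul_le_mul_of_nonneg_right h1 (by positivity : (0:ℝ) ≤ 30 * ρ * Y^2)
      nlinarith [h2]
    have big : 0 ≤ (1860 * ρ) * (T + ρ * Y^2 / 2 + (ρ - ρh) * b * Y
        - c₀ * ((ρ - ρh)^2 + Y^2)) := by
      linarith [t1, t2, key', hρT]
    have := nonneg_cancel (by positivity : (0:ℝ) < 1860 * ρ) big
    linarith
  · -- case 2
    push_neg at hcase
    have hf := case2_log hρ0 hcase.le
    have hT4 : β^2 * (ρ * (7 - 8 * Real.log 2) - 4 * ρ + 2 * ρh) ≤ T := by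
      nlinarith [mul_le_mul_of_nonneg_left hf (by positivity : (0:ℝ) ≤ β^2)]
    have hDabs : |ρ - ρh| = ρh - ρ := by
      rw [abs_sub_comm, abs_of_nonneg (by linarith)]
    have hcr : -(β * (ρh - ρ) * |Y|) ≤ (ρ - ρh) * b * Y := by
      have h1 : |(ρ - ρh) * b * Y| ≤ (ρh - ρ) * β * |Y| := by
        rw [abs_mul, abs_mul, hDabs]
        apply mul_le_mul_of_nonneg_right _ (abs_nonneg Y)
        exact mul_le_mul_of_nonneg_left hb (by linarith)
      nlinarith [neg_abs_le ((ρ - ρh) * b * Y), h1]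
    have hA0 : 0 ≤ ρ / 2 - c₀ := by linarith [hc2, hρ.1]
    have hfact : 0 ≤ (2 * β - |Y|) * (β * (ρh - ρ) - (ρ / 2 - c₀) * (|Y| + 2 * β)) := by
      apply mul_nonneg (by linarith [abs_nonneg Y])
      have h1 : (ρ / 2 - c₀) * (|Y| + 2 * β) ≤ (ρ / 2 - c₀) * (4 * β) := by
        apply mul_le_mul_of_nonneg_left _ hA0
        linarith
      have h2 : (ρ / 2 - c₀) * (4 * β) ≤ β * (ρh - ρ) := by
        nlinarith [hc₀pos.le, hβ.le]
      linarith
    have hYsq : Y^2 = |Y|^2 := (sq_abs Y).symm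
    have hDsq : (ρ - ρh)^2 ≤ rhi^2 := by
      nlinarith [hρh.2, hρ.1, hρ.2, hrlo]
    nlinarith [hT4, hcr, hfact, hYsq, hDsq, hc3, abs_nonneg Y, hc₀pos.le, hm2.le,
      mul_le_mul_of_nonneg_left hρ.1 (by positivity : (0:ℝ) ≤ 2 * β^2 * (7/2 - 4 * Real.log 2)),
      mul_nonneg hc₀pos.le (by linarith [hDsq] : (0:ℝ) ≤ rhi^2 - (ρ - ρh)^2)]

private lemma Prel_bound (P : ℝ → ℝ) (hP : ContDiff ℝ (⊤ : ℕ∞) P) {rlo rhi M₃ : ℝ}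
    (hM : ∀ r ∈ Icc rlo rhi, ‖deriv (deriv (deriv P)) r‖ ≤ M₃)
    {u v : ℝ} (hu : u ∈ Icc rlo rhi) (hv : v ∈ Icc rlo rhi) :
    |deriv P u - deriv P v - deriv (deriv P) v * (u - v)| ≤ M₃ * (u - v)^2 := by
  have hPi : ContDiff ℝ (⊤ : ℕ∞) P := hP.of_le (by simp)
  have hP' : ContDiff ℝ (⊤ : ℕ∞) (deriv P) := (contDiff_infty_iff_deriv.mp hPi).2
  have hP'' : ContDiff ℝ (⊤ : ℕ∞) (deriv (deriv P)) := (contDiff_infty_iff_deriv.mp hP').2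
  have hP'd : Differentiable ℝ (deriv P) := hP'.differentiable (by simp)
  have hP''d : Differentiable ℝ (deriv (deriv P)) := hP''.differentiable (by simp)
  have hsub : uIcc v u ⊆ Icc rlo rhi := uIcc_subset_Icc hv hu
  -- inner Lipschitz bound for deriv (deriv P)
  have hlip : ∀ x ∈ uIcc v u, ‖deriv (deriv P) x - deriv (deriv P) v‖ ≤ M₃ * |u - v| := by
    intro x hx
    have h1 : ‖deriv (deriv P) x - deriv (deriv P) v‖ ≤ M₃ * ‖x - v‖ := by
      apply (convex_Icc rlo rhi).norm_image_sub_le_of_norm_hasDerivWithin_le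
        (f' := fun r => deriv (deriv (deriv P)) r)
        (fun r hr => ((hP''d r).hasDerivAt).hasDerivWithinAt) hM hv (hsub hx)
    have h2 : ‖x - v‖ ≤ |u - v| := by
      rw [Real.norm_eq_abs]
      rcases le_total v u with h | h
      · rw [uIcc_of_le h] at hx
        rw [abs_of_nonneg (by linarith [hx.1] : (0:ℝ) ≤ x - v),
          abs_of_nonneg (by linarith : (0:ℝ) ≤ u - v)]
        linarith [hx.2]
      · rw [uIcc_of_ge h] at hx
        rw [abs_of_nonpos (by linarith [hx.2] : x - v ≤ 0),
          abs_of_nonpos (by linarith : u - v ≤ 0)]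
        linarith [hx.1]
    have hM0 : 0 ≤ M₃ := le_trans (norm_nonneg _) (hM v hv)
    calc ‖deriv (deriv P) x - deriv (deriv P) v‖ ≤ M₃ * ‖x - v‖ := h1
      _ ≤ M₃ * |u - v| := mul_le_mul_of_nonneg_left h2 hM0
  -- outer bound for g r = deriv P r - r * deriv (deriv P) v
  set g : ℝ → ℝ := fun r => deriv P r - r * deriv (deriv P) v with hg
  have hgd : ∀ x ∈ uIcc v u, HasDerivWithinAt g
      (deriv (deriv P) x - deriv (deriv P) v) (uIcc v u) x := by
    intro x hx
    exact (((hP'd x).hasDerivAt).sub (hasDerivAt_mul_const _)).hasDerivWithinAt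
  have hout : ‖g u - g v‖ ≤ M₃ * |u - v| * ‖u - v‖ :=
    (convex_uIcc v u).norm_image_sub_le_of_norm_hasDerivWithin_le hgd
      (fun x hx => hlip x hx) (left_mem_uIcc) (right_mem_uIcc)
  have hgid : g u - g v = deriv P u - deriv P v - deriv (deriv P) v * (u - v) := by
    simp only [hg]; ring
  rw [hgid, Real.norm_eq_abs] at hout
  calc |deriv P u - deriv P v - deriv (deriv P) v * (u - v)|
      ≤ M₃ * |u - v| * |u - v| := hout
    _ = M₃ * (u - v)^2 := by rw [mul_assoc, abs_mul_abs_self]; ring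


private lemma amgm_eps {e u v : ℝ} (he : 0 ≤ e) :
    e^2 * (u * v) ≤ e * ((u^2 + (e*v)^2) / 2) := by
  nlinarith [mul_nonneg he (sq_nonneg (u - e*v))]



/-- condition (C2): under assumptions (A1)–(A2) there is a
constant `C ≥ 0`, depending only on the bounds in (A1)–(A2), such that
`∫₀^ℓ a ∂_τρ̂ (P'(ρ|ρ̂) + ε²(w−ŵ)²/2) dx + ∫₀^ℓ ε² ∂_τŵ a (ρ−ρ̂)(w−ŵ) dx
 ≤ C (‖∂_τρ̂‖_{L∞} + ‖ε ∂_τŵ‖_{L∞}) H(u|û)`,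
where `P'(ρ|ρ̂) = P'(ρ) − P'(ρ̂) − P''(ρ̂)(ρ−ρ̂)`. -/
theorem quadratic_remainder_bound
    (ℓ g : ℝ) (hℓ : 0 < ℓ)
    (P : ℝ → ℝ) (hP : ContDiff ℝ (⊤ : ℕ∞) P) (hPconv : StrictConvexOn ℝ (Set.Ioi 0) P)
    (rlo rhi wbar εbar alo ahi gzbar : ℝ)
    (hrlo : 0 < rlo) (hrr : rlo ≤ rhi) (hwbar : 0 < wbar) (hεbar : 0 < εbar)
    (halo : 0 < alo) (haa : alo ≤ ahi)
    (hA1 : ∀ r ∈ Set.Icc rlo rhi, 4 * εbar ^ 2 * wbar ^ 2 ≤ r * deriv (deriv P) r) :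
    ∃ C : ℝ, 0 ≤ C ∧
      ∀ (a z : ℝ → ℝ) (ε : ℝ) (ρ w ρh wh ρht wht : ℝ → ℝ) (Mρ Mw : ℝ),
        Continuous a → Continuous z →
        Continuous ρ → Continuous w → Continuous ρh → Continuous wh →
        Continuous ρht → Continuous wht →
        (∀ x, alo ≤ a x ∧ a x ≤ ahi) → (∀ x, |g * z x| ≤ gzbar) →
        0 ≤ ε → ε ≤ εbar →
        (∀ x ∈ Set.Icc (0:ℝ) ℓ,
          rlo ≤ ρ x ∧ ρ x ≤ rhi ∧ rlo ≤ ρh x ∧ ρh x ≤ rhi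
            ∧ |w x| ≤ wbar ∧ |wh x| ≤ wbar) →
        -- L^∞ bounds on the time-derivative data
        (∀ x ∈ Set.Icc (0:ℝ) ℓ, |ρht x| ≤ Mρ) →
        (∀ x ∈ Set.Icc (0:ℝ) ℓ, |wht x| ≤ Mw) →
        (∫ x in (0:ℝ)..ℓ,
            a x * ρht x
              * ((deriv P (ρ x) - deriv P (ρh x)
                    - deriv (deriv P) (ρh x) * (ρ x - ρh x))
                  + ε ^ 2 * (w x - wh x) ^ 2 / 2))
          + (∫ x in (0:ℝ)..ℓ,
              ε ^ 2 * wht x * a x * (ρ x - ρh x) * (w x - wh x))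
          ≤ C * (Mρ + ε * Mw) * relEnergy ℓ g ε a z P ρ w ρh wh := by
  have hrhi : 0 < rhi := lt_of_lt_of_le hrlo hrr
  have hahi : 0 < ahi := lt_of_lt_of_le halo haa
  set β : ℝ := εbar * wbar with hβdef
  have hβ : 0 < β := by positivity
  have hm2 : 0 < 7/2 - 4 * Real.log 2 := by
    have := Real.log_two_lt_d9; linarith
  -- smoothness consequences
  have hPi : ContDiff ℝ (⊤ : ℕ∞) P := hP.of_le (by simp)
  have hPc : Continuous P := hPi.continuous
  have hP'i : ContDiff ℝ (⊤ : ℕ∞) (deriv P) := (contDiff_infty_iff_deriv.mp hPi).2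
  have hP'c : Continuous (deriv P) := hP'i.continuous
  have hP''i : ContDiff ℝ (⊤ : ℕ∞) (deriv (deriv P)) := (contDiff_infty_iff_deriv.mp hP'i).2
  have hP''c : Continuous (deriv (deriv P)) := hP''i.continuous
  have hP'''c : Continuous (deriv (deriv (deriv P))) :=
    ((contDiff_infty_iff_deriv.mp hP''i).2).continuous
  -- bound on the third derivative
  obtain ⟨M₃, hM₃⟩ := (isCompact_Icc : IsCompact (Icc rlo rhi)).exists_bound_of_continuousOn
    hP'''c.continuousOn
  have hM₃0 : 0 ≤ M₃ := le_trans (norm_nonneg _) (hM₃ rlo ⟨le_refl _, hrr⟩)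
  -- coercivity constant
  set c₀ : ℝ := min (min (β^2 / (60 * rhi)) (rlo / 62))
      (2 * β^2 * rlo * (7/2 - 4 * Real.log 2) / (4 * β^2 + rhi^2)) with hc₀
  have hc₀pos : 0 < c₀ :=
    lt_min (lt_min (by positivity) (by positivity)) (by positivity)
  refine ⟨ahi * (M₃ + 1) / (alo * c₀), by positivity, ?_⟩
  intro a z ε ρ w ρh wh ρht wht Mρ Mw ha hz hρc hwc hρhc hwhc hρhtc hwhtc haB hgz hε0 hεbar'
    hadm hMρ hMw
  set C : ℝ := ahi * (M₃ + 1) / (alo * c₀) with hC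
  have hCc : C * (alo * c₀) = ahi * (M₃ + 1) := div_mul_cancel₀ _ (by positivity)
  have hC0 : 0 ≤ C := by positivity
  have hMρ0 : 0 ≤ Mρ := le_trans (abs_nonneg _) (hMρ 0 ⟨le_refl _, hℓ.le⟩)
  have hMw0 : 0 ≤ Mw := le_trans (abs_nonneg _) (hMw 0 ⟨le_refl _, hℓ.le⟩)
  have hK0 : 0 ≤ Mρ + ε * Mw := by positivity
  -- the three integrands
  set F1 : ℝ → ℝ := fun x => a x * ρht x
      * ((deriv P (ρ x) - deriv P (ρh x)
            - deriv (deriv P) (ρh x) * (ρ x - ρh x))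
          + ε ^ 2 * (w x - wh x) ^ 2 / 2) with hF1def
  set F2 : ℝ → ℝ := fun x => ε ^ 2 * wht x * a x * (ρ x - ρh x) * (w x - wh x) with hF2def
  set I : ℝ → ℝ := fun x =>
      (a x * (ε ^ 2 * ρ x * (w x) ^ 2 / 2 + P (ρ x) + g * z x * ρ x)
      - a x * (ε ^ 2 * ρh x * (wh x) ^ 2 / 2 + P (ρh x) + g * z x * ρh x)
      - (a x * (ε ^ 2 * (wh x) ^ 2 / 2 + deriv P (ρh x) + g * z x) * (ρ x - ρh x)
          + a x * ε ^ 2 * ρh x * wh x * (w x - wh x))) with hIdef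
  -- pointwise estimate
  have hpt : ∀ x ∈ Icc (0:ℝ) ℓ, F1 x + F2 x ≤ C * (Mρ + ε * Mw) * I x := by
    intro x hx
    obtain ⟨hr1, hr2, hr3, hr4, hw5, hw6⟩ := hadm x hx
    have hρmem : ρ x ∈ Icc rlo rhi := ⟨hr1, hr2⟩
    have hρhmem : ρh x ∈ Icc rlo rhi := ⟨hr3, hr4⟩
    have haB1 := (haB x).1
    have haB2 := (haB x).2
    have hax0 : 0 < a x := lt_of_lt_of_le halo haB1
    have hMρx := hMρ x hx
    have hMwx := hMw x hx
    -- admissibility bounds for the coercivity lemma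
    have hwsub : |w x - wh x| ≤ 2 * wbar := by
      have h5 := abs_le.mp hw5
      have h6 := abs_le.mp hw6
      rw [abs_le]; constructor <;> linarith
    have hYabs : |ε * (w x - wh x)| ≤ 2 * β := by
      rw [abs_mul, abs_of_nonneg hε0]
      have h1 : ε * |w x - wh x| ≤ εbar * (2 * wbar) :=
        mul_le_mul hεbar' hwsub (abs_nonneg _) hεbar.le
      have h2 : εbar * (2 * wbar) = 2 * β := by rw [hβdef]; ring
      linarith
    have hbabs : |ε * wh x| ≤ β := by
      rw [abs_mul, abs_of_nonneg hε0]
      calc ε * |wh x| ≤ εbar * wbar := mul_le_mul hεbar' hw6 (abs_nonneg _) hεbar.le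
        _ = β := hβdef.symm
    -- lower bound for the Bregman term
    have hT : 4 * β^2 * (ρ x * (Real.log (ρ x) - Real.log (ρh x)) - ρ x + ρh x)
        ≤ P (ρ x) - P (ρh x) - deriv P (ρh x) * (ρ x - ρh x) := by
      have hbl := bregman_log P hP hrlo (by positivity) hA1 hρhmem hρmem
      have hk : 4 * β^2 = 4 * εbar ^ 2 * wbar ^ 2 := by rw [hβdef]; ring
      rw [hk]
      exact hbl
    have hEc := pointwise_coercive hβ hrlo hrr hρmem hρhmem hT hYabs hbabs
    rw [← hc₀] at hEc
    set Ex : ℝ := (P (ρ x) - P (ρh x) - deriv P (ρh x) * (ρ x - ρh x))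
        + ρ x * (ε * (w x - wh x))^2 / 2
        + (ρ x - ρh x) * (ε * wh x) * (ε * (w x - wh x)) with hExdef
    have hEx0 : 0 ≤ Ex := le_trans (by positivity) hEc
    set B : ℝ := (ρ x - ρh x)^2 + (ε * (w x - wh x))^2 with hBdef
    -- F1 bound
    have hPrel := Prel_bound P hP hM₃ hρmem hρhmem
    have hb1 : |a x * ρht x| ≤ ahi * Mρ := by
      rw [abs_mul, abs_of_nonneg hax0.le]
      exact mul_le_mul haB2 hMρx (abs_nonneg _) hahi.le
    have hb2 : |(deriv P (ρ x) - deriv P (ρh x)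
          - deriv (deriv P) (ρh x) * (ρ x - ρh x)) + ε ^ 2 * (w x - wh x) ^ 2 / 2|
        ≤ M₃ * (ρ x - ρh x)^2 + (ε * (w x - wh x))^2 / 2 := by
      have h1 := abs_add_le (deriv P (ρ x) - deriv P (ρh x)
          - deriv (deriv P) (ρh x) * (ρ x - ρh x)) (ε ^ 2 * (w x - wh x) ^ 2 / 2)
      have h2 : |ε ^ 2 * (w x - wh x) ^ 2 / 2| = (ε * (w x - wh x))^2 / 2 := by
        rw [abs_of_nonneg (by positivity)]; ring
      linarith [hPrel]
    have hF1b : F1 x ≤ ahi * Mρ * (M₃ * (ρ x - ρh x)^2 + (ε * (w x - wh x))^2 / 2) := by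
      calc F1 x ≤ |F1 x| := le_abs_self _
        _ = |a x * ρht x| * |(deriv P (ρ x) - deriv P (ρh x)
              - deriv (deriv P) (ρh x) * (ρ x - ρh x)) + ε ^ 2 * (w x - wh x) ^ 2 / 2| := by
            rw [hF1def]; exact abs_mul _ _
        _ ≤ (ahi * Mρ) * (M₃ * (ρ x - ρh x)^2 + (ε * (w x - wh x))^2 / 2) :=
            mul_le_mul hb1 hb2 (abs_nonneg _) (by positivity)
    -- F2 bound
    have hF2b : F2 x ≤ ahi * (ε * Mw) * (B / 2) := by
      have key : F2 x ≤ |wht x| * a x * (ε^2 * (|ρ x - ρh x| * |w x - wh x|)) := by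
        calc F2 x ≤ |F2 x| := le_abs_self _
          _ = |wht x| * a x * (ε^2 * (|ρ x - ρh x| * |w x - wh x|)) := by
              rw [hF2def]
              rw [abs_mul, abs_mul, abs_mul, abs_mul, abs_of_nonneg (by positivity : (0:ℝ) ≤ ε^2),
                abs_of_nonneg hax0.le]
              ring
      have s1 : |wht x| * a x ≤ Mw * ahi :=
        mul_le_mul hMwx haB2 hax0.le hMw0
      have s3 : ε^2 * (|ρ x - ρh x| * |w x - wh x|) ≤ ε * (B / 2) := by
        have e1 : |ρ x - ρh x|^2 = (ρ x - ρh x)^2 := sq_abs _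
        have e2 : (ε * |w x - wh x|)^2 = (ε * (w x - wh x))^2 := by
          rw [mul_pow, mul_pow, sq_abs]
        have h0 := amgm_eps hε0 (u := |ρ x - ρh x|) (v := |w x - wh x|)
        rw [e1, e2] at h0
        rw [hBdef]
        linarith [h0]
      have s2 : |wht x| * a x * (ε^2 * (|ρ x - ρh x| * |w x - wh x|))
          ≤ (Mw * ahi) * (ε^2 * (|ρ x - ρh x| * |w x - wh x|)) :=
        mul_le_mul_of_nonneg_right s1 (by positivity)
      have s4 : (Mw * ahi) * (ε^2 * (|ρ x - ρh x| * |w x - wh x|))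
          ≤ (Mw * ahi) * (ε * (B / 2)) :=
        mul_le_mul_of_nonneg_left s3 (by positivity)
      have e5 : (Mw * ahi) * (ε * (B / 2)) = ahi * (ε * Mw) * (B / 2) := by ring
      linarith [key, s2, s4]
    -- combine the two upper bounds
    have hεMw : 0 ≤ ε * Mw := by positivity
    have hB0 : 0 ≤ B := by rw [hBdef]; positivity
    have hD20 : 0 ≤ (ρ x - ρh x)^2 := sq_nonneg _
    have hY20 : 0 ≤ (ε * (w x - wh x))^2 := sq_nonneg _
    have hsum : F1 x + F2 x ≤ ahi * (M₃ + 1) * (Mρ + ε * Mw) * B := by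
      rw [hBdef] at hF2b ⊢
      linarith [hF1b, hF2b,
        mul_nonneg (mul_nonneg hahi.le hMρ0) hD20,
        mul_nonneg (mul_nonneg hahi.le hMρ0) hY20,
        mul_nonneg (mul_nonneg (mul_nonneg hahi.le hMρ0) hM₃0) hY20,
        mul_nonneg (mul_nonneg hahi.le hεMw) hD20,
        mul_nonneg (mul_nonneg hahi.le hεMw) hY20,
        mul_nonneg (mul_nonneg (mul_nonneg hahi.le hεMw) hM₃0) hD20,
        mul_nonneg (mul_nonneg (mul_nonneg hahi.le hεMw) hM₃0) hY20]
    -- lower bound for the energy integrand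
    have hIex : I x = a x * Ex := by rw [hIdef, hExdef]; ring
    have step2 : alo * (c₀ * B) ≤ a x * Ex := by
      have u1 : alo * (c₀ * B) ≤ alo * Ex := mul_le_mul_of_nonneg_left hEc halo.le
      have u2 : alo * Ex ≤ a x * Ex := mul_le_mul_of_nonneg_right haB1 hEx0
      linarith
    have step3 : C * (Mρ + ε * Mw) * (alo * (c₀ * B)) ≤ C * (Mρ + ε * Mw) * (a x * Ex) :=
      mul_le_mul_of_nonneg_left step2 (by positivity)
    have step4 : C * (Mρ + ε * Mw) * (alo * (c₀ * B)) = ahi * (M₃ + 1) * (Mρ + ε * Mw) * B := by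
      have e : C * (Mρ + ε * Mw) * (alo * (c₀ * B)) = (C * (alo * c₀)) * ((Mρ + ε * Mw) * B) := by
        ring
      rw [e, hCc]; ring
    rw [hIex]
    linarith [hsum, step3, step4]
  -- continuity of the integrands
  have hF1c : Continuous F1 := by
    rw [hF1def]; fun_prop
  have hF2c : Continuous F2 := by
    rw [hF2def]; fun_prop
  have hIc : Continuous I := by
    rw [hIdef]; fun_prop
  have hF1i : IntervalIntegrable F1 MeasureTheory.volume 0 ℓ := hF1c.intervalIntegrable 0 ℓ
  have hF2i : IntervalIntegrable F2 MeasureTheory.volume 0 ℓ := hF2c.intervalIntegrable 0 ℓ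
  have hGi : IntervalIntegrable (fun x => C * (Mρ + ε * Mw) * I x) MeasureTheory.volume 0 ℓ :=
    (continuous_const.mul hIc).intervalIntegrable 0 ℓ
  have hrel : relEnergy ℓ g ε a z P ρ w ρh wh = ∫ x in (0:ℝ)..ℓ, I x := by
    rw [relEnergy]
  calc (∫ x in (0:ℝ)..ℓ, F1 x) + (∫ x in (0:ℝ)..ℓ, F2 x)
      = ∫ x in (0:ℝ)..ℓ, (F1 x + F2 x) := (intervalIntegral.integral_add hF1i hF2i).symm
    _ ≤ ∫ x in (0:ℝ)..ℓ, C * (Mρ + ε * Mw) * I x :=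
        intervalIntegral.integral_mono_on hℓ.le (hF1i.add hF2i) hGi hpt
    _ = C * (Mρ + ε * Mw) * ∫ x in (0:ℝ)..ℓ, I x := intervalIntegral.integral_const_mul _ _
    _ = C * (Mρ + ε * Mw) * relEnergy ℓ g ε a z P ρ w ρh wh := by rw [hrel]
end

section
/- Let û = (ρ̂,ŵ) be a classical solution of the gas flow system with parameters ε̂, γ̂, satisfying assumptions (A1)–(A2), with ∂_τŵ and ∂_xŵ in L^∞(0,T;L²(0,ℓ)). Define the residual ê = (ê₁, ê₂) with ê₁ = 0 and ê₂ = (ε² − ε̂²)(∂_τŵ + (1/2)∂_x|ŵ|²) + (γ − γ̂)|ŵ|ŵ. Then the perturbation functional P(ê) = C₁‖ê₁‖²_{L²} + C₂‖ê₂‖²_{L²} + C₃‖ê₂‖^{3/2}_{L^{3/2}} satisfies P(ê) ≤ Ĉ₃' |ε² − ε̂²|^{3/2} + Ĉ₃'' |γ − γ̂|^{3/2}, with constants Ĉ₃', Ĉ₃'' depending only on the bounds in (A1)–(A2) and on ‖∂_τŵ‖_{L^∞(0,T;L²)} and ‖∂_xŵ‖_{L^∞(0,T;L²)}. -/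
/-!
Write the residual as `a f + b g` with `a = ε² − ε̂²`, `b = γ − γ̂`,
`f = ∂_τŵ + ŵ ∂_xŵ` and `g = |ŵ|ŵ`, so that `|g| ≤ w̄²` and
`f² ≤ 2 (∂_τŵ² + w̄² ∂_xŵ²)`. Pointwise `(a f + b g)² ≤ 2a²f² + 2b²g²`, and by
convexity of `t ↦ t^{3/2}` together with `|f|^{3/2} ≤ 1 + f²` also
`|a f + b g|^{3/2} ≤ √2 (|a|^{3/2} (1 + f²) + |b|^{3/2} |g|^{3/2})`. Integrating over
`(0, ℓ)` bounds both norms through the `L²` norms of `∂_τŵ` and `∂_xŵ`. The `L²` term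
still carries `a²` and `b²`; since `|a| ≤ ε̄²` and `|b| ≤ γ̄ − γ̲`, the inequality
`A² ≤ √M A^{3/2}` for `0 ≤ A ≤ M` turns them into `3/2` powers.
-/

open intervalIntegral Set

lemma Real.rpow_add_le_mul_rpow_add_rpow {x y p : ℝ} (hx : 0 ≤ x) (hy : 0 ≤ y) (hp : 1 ≤ p) :
    (x + y) ^ p ≤ 2 ^ (p - 1) * (x ^ p + y ^ p) := by
  lift x to NNReal using hx
  lift y to NNReal using hy
  exact_mod_cast NNReal.rpow_add_le_mul_rpow_add_rpow x y hp

lemma abs_rpow_le_one_add_sq (t : ℝ) {p : ℝ} (hp₀ : 0 ≤ p) (hp₂ : p ≤ 2) :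
    |t| ^ p ≤ 1 + t ^ 2 := by
  rcases le_total |t| 1 with ht | ht
  · linarith [Real.rpow_le_one (abs_nonneg t) ht hp₀, sq_nonneg t]
  · calc |t| ^ p ≤ |t| ^ (2 : ℝ) := Real.rpow_le_rpow_of_exponent_le ht hp₂
      _ = t ^ 2 := by rw [Real.rpow_two, sq_abs]
      _ ≤ 1 + t ^ 2 := by linarith

lemma sq_le_sqrt_mul_rpow_of_le {A M : ℝ} (hA : 0 ≤ A) (hAM : A ≤ M) :
    A ^ 2 ≤ √M * A ^ (3 / 2 : ℝ) := by
  calc A ^ 2 = √A * A ^ (3 / 2 : ℝ) := by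
        rw [Real.sqrt_eq_rpow, ← Real.rpow_add_of_nonneg hA (by norm_num) (by norm_num)]
        norm_num
    _ ≤ √M * A ^ (3 / 2 : ℝ) := by gcongr

lemma intervalIntegral.integral_le_mul_add_of_le {f g : ℝ → ℝ} {a b α β K : ℝ} (hab : a ≤ b)
    (hf : IntervalIntegrable f MeasureTheory.volume a b)
    (hg : IntervalIntegrable g MeasureTheory.volume a b) (hα : 0 ≤ α)
    (hfg : ∀ x ∈ Icc a b, f x ≤ α * g x + β) (hgK : ∫ x in a..b, g x ≤ K) :
    ∫ x in a..b, f x ≤ α * K + β * (b - a) := by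
  calc ∫ x in a..b, f x ≤ ∫ x in a..b, (α * g x + β) :=
        integral_mono_on hab hf ((hg.const_mul α).add intervalIntegrable_const) hfg
    _ = α * (∫ x in a..b, g x) + β * (b - a) := by
        rw [integral_add (hg.const_mul α) intervalIntegrable_const, integral_const_mul,
          integral_const, smul_eq_mul]
        ring
    _ ≤ α * K + β * (b - a) := by gcongr

lemma sq_add_mul_le_of_abs_le {t s w W : ℝ} (hw : |w| ≤ W) :
    (t + w * s) ^ 2 ≤ 2 * (t ^ 2 + W ^ 2 * s ^ 2) := by
  have hw2 : w ^ 2 ≤ W ^ 2 := sq_le_sq' (neg_le_of_abs_le hw) (le_of_abs_le hw)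
  calc (t + w * s) ^ 2 ≤ 2 * (t ^ 2 + (w * s) ^ 2) := add_sq_le
    _ ≤ 2 * (t ^ 2 + W ^ 2 * s ^ 2) := by rw [mul_pow]; gcongr

lemma abs_abs_mul_self_le_sq {w W : ℝ} (hw : |w| ≤ W) : |(|w| * w)| ≤ W ^ 2 := by
  rw [abs_mul, abs_abs, ← sq]
  exact pow_le_pow_left₀ (abs_nonneg w) hw 2

lemma sq_mul_add_mul_le_of_abs_le {a b f g G : ℝ} (hg : |g| ≤ G) :
    (a * f + b * g) ^ 2 ≤ 2 * a ^ 2 * f ^ 2 + 2 * b ^ 2 * G ^ 2 := by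
  have hg2 : g ^ 2 ≤ G ^ 2 := sq_le_sq' (neg_le_of_abs_le hg) (le_of_abs_le hg)
  calc (a * f + b * g) ^ 2 ≤ 2 * ((a * f) ^ 2 + (b * g) ^ 2) := add_sq_le
    _ = 2 * a ^ 2 * f ^ 2 + 2 * b ^ 2 * g ^ 2 := by ring
    _ ≤ 2 * a ^ 2 * f ^ 2 + 2 * b ^ 2 * G ^ 2 := by gcongr

lemma abs_mul_add_mul_rpow_le_of_abs_le {a b f g G p : ℝ} (hg : |g| ≤ G) (hp₁ : 1 ≤ p)
    (hp₂ : p ≤ 2) :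
    |a * f + b * g| ^ p ≤ 2 ^ (p - 1) * (|a| ^ p * (1 + f ^ 2) + |b| ^ p * G ^ p) := by
  have hp₀ : 0 ≤ p := by linarith
  have hG : 0 ≤ G := (abs_nonneg g).trans hg
  calc |a * f + b * g| ^ p ≤ (|a| * |f| + |b| * G) ^ p := by
        gcongr
        calc |a * f + b * g| ≤ |a * f| + |b * g| := abs_add_le _ _
          _ ≤ |a| * |f| + |b| * G := by rw [abs_mul, abs_mul]; gcongr
    _ ≤ 2 ^ (p - 1) * ((|a| * |f|) ^ p + (|b| * G) ^ p) :=
        Real.rpow_add_le_mul_rpow_add_rpow (by positivity) (by positivity) hp₁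
    _ ≤ 2 ^ (p - 1) * (|a| ^ p * (1 + f ^ 2) + |b| ^ p * G ^ p) := by
        rw [Real.mul_rpow (abs_nonneg a) (abs_nonneg f), Real.mul_rpow (abs_nonneg b) hG]
        gcongr
        exact abs_rpow_le_one_add_sq f hp₀ hp₂

section Residual

variable {ℓ W Mt Mx : ℝ} {w wt wx : ℝ → ℝ}

lemma integral_sq_add_sq_le (hwt : Continuous wt) (hwx : Continuous wx)
    (hMt : ∫ x in (0 : ℝ)..ℓ, wt x ^ 2 ≤ Mt ^ 2) (hMx : ∫ x in (0 : ℝ)..ℓ, wx x ^ 2 ≤ Mx ^ 2) :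
    ∫ x in (0 : ℝ)..ℓ, (wt x ^ 2 + W ^ 2 * wx x ^ 2) ≤ Mt ^ 2 + W ^ 2 * Mx ^ 2 := by
  rw [integral_add ((by fun_prop : Continuous fun x ↦ wt x ^ 2).intervalIntegrable _ _)
      ((by fun_prop : Continuous fun x ↦ W ^ 2 * wx x ^ 2).intervalIntegrable _ _),
    integral_const_mul]
  gcongr

variable (hℓ : 0 ≤ ℓ) (hw : ∀ x ∈ Icc 0 ℓ, |w x| ≤ W) (hcw : Continuous w)
  (hwt : Continuous wt) (hwx : Continuous wx)
  (hMt : ∫ x in (0 : ℝ)..ℓ, wt x ^ 2 ≤ Mt ^ 2) (hMx : ∫ x in (0 : ℝ)..ℓ, wx x ^ 2 ≤ Mx ^ 2)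
include hℓ hw hcw hwt hwx hMt hMx

lemma integral_residual_sq_le (a b : ℝ) :
    ∫ x in (0 : ℝ)..ℓ, (a * (wt x + w x * wx x) + b * (|w x| * w x)) ^ 2
      ≤ 4 * a ^ 2 * (Mt ^ 2 + W ^ 2 * Mx ^ 2) + 2 * b ^ 2 * (W ^ 2) ^ 2 * ℓ := by
  refine (integral_le_mul_add_of_le (α := 4 * a ^ 2) (β := 2 * b ^ 2 * (W ^ 2) ^ 2) hℓ
    ((by fun_prop : Continuous fun x ↦
      (a * (wt x + w x * wx x) + b * (|w x| * w x)) ^ 2).intervalIntegrable _ _)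
    ((by fun_prop : Continuous fun x ↦ wt x ^ 2 + W ^ 2 * wx x ^ 2).intervalIntegrable _ _)
    (by positivity) ?_ (integral_sq_add_sq_le hwt hwx hMt hMx)).trans_eq (by ring)
  intro x hx
  calc (a * (wt x + w x * wx x) + b * (|w x| * w x)) ^ 2
      ≤ 2 * a ^ 2 * (wt x + w x * wx x) ^ 2 + 2 * b ^ 2 * (W ^ 2) ^ 2 :=
        sq_mul_add_mul_le_of_abs_le (abs_abs_mul_self_le_sq (hw x hx))
    _ ≤ 2 * a ^ 2 * (2 * (wt x ^ 2 + W ^ 2 * wx x ^ 2)) + 2 * b ^ 2 * (W ^ 2) ^ 2 := by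
        gcongr; exact sq_add_mul_le_of_abs_le (hw x hx)
    _ = 4 * a ^ 2 * (wt x ^ 2 + W ^ 2 * wx x ^ 2) + 2 * b ^ 2 * (W ^ 2) ^ 2 := by ring

lemma integral_abs_residual_rpow_le (a b : ℝ) {p : ℝ} (hp₁ : 1 ≤ p) (hp₂ : p ≤ 2) :
    ∫ x in (0 : ℝ)..ℓ, |a * (wt x + w x * wx x) + b * (|w x| * w x)| ^ p
      ≤ 2 ^ (p - 1) * (|a| ^ p * (ℓ + 2 * (Mt ^ 2 + W ^ 2 * Mx ^ 2))
        + |b| ^ p * (W ^ 2) ^ p * ℓ) := by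
  have hp₀ : 0 ≤ p := by linarith
  refine (integral_le_mul_add_of_le (α := 2 ^ (p - 1) * |a| ^ p * 2)
    (β := 2 ^ (p - 1) * (|a| ^ p + |b| ^ p * (W ^ 2) ^ p)) hℓ
    ((by fun_prop (disch := exact fun _ ↦ Or.inr hp₀) : Continuous fun x ↦
      |a * (wt x + w x * wx x) + b * (|w x| * w x)| ^ p).intervalIntegrable _ _)
    ((by fun_prop : Continuous fun x ↦ wt x ^ 2 + W ^ 2 * wx x ^ 2).intervalIntegrable _ _)
    (by positivity) ?_ (integral_sq_add_sq_le hwt hwx hMt hMx)).trans_eq (by ring)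
  intro x hx
  calc |a * (wt x + w x * wx x) + b * (|w x| * w x)| ^ p
      ≤ 2 ^ (p - 1) * (|a| ^ p * (1 + (wt x + w x * wx x) ^ 2) + |b| ^ p * (W ^ 2) ^ p) :=
        abs_mul_add_mul_rpow_le_of_abs_le (abs_abs_mul_self_le_sq (hw x hx)) hp₁ hp₂
    _ ≤ 2 ^ (p - 1) * (|a| ^ p * (1 + 2 * (wt x ^ 2 + W ^ 2 * wx x ^ 2))
        + |b| ^ p * (W ^ 2) ^ p) := by
        gcongr; exact sq_add_mul_le_of_abs_le (hw x hx)
    _ = 2 ^ (p - 1) * |a| ^ p * 2 * (wt x ^ 2 + W ^ 2 * wx x ^ 2)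
        + 2 ^ (p - 1) * (|a| ^ p + |b| ^ p * (W ^ 2) ^ p) := by ring

end Residual

theorem residual_perturbation_functional_bound_general
    (ℓ : ℝ) (hℓ : 0 < ℓ)
    (wbar εbar γlo γhi Mt Mx : ℝ)
    -- the constants of the perturbation bound in condition (C3)
    (C1 C2 C3 : ℝ) (hC2 : 0 ≤ C2) (hC3 : 0 ≤ C3) :
    ∃ C3' C3'' : ℝ, 0 ≤ C3' ∧ 0 ≤ C3'' ∧
      ∀ (ε εh γ γh : ℝ) (wh wht whx eh2 : ℝ → ℝ),
        0 ≤ ε → ε ≤ εbar → 0 ≤ εh → εh ≤ εbar →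
        γlo ≤ γ → γ ≤ γhi → γlo ≤ γh → γh ≤ γhi →
        Continuous wh → Continuous wht → Continuous whx →
        -- ŵ is a bounded classical solution profile: |ŵ| ≤ w̄, ∂_xŵ = whx
        (∀ x ∈ Set.Icc (0:ℝ) ℓ, |wh x| ≤ wbar) →
        (∀ x : ℝ, HasDerivAt wh (whx x) x) →
        -- bounds on ‖∂_τŵ‖_{L^∞(0,T;L²)} and ‖∂_xŵ‖_{L^∞(0,T;L²)}
        (∫ x in (0:ℝ)..ℓ, (wht x) ^ 2) ≤ Mt ^ 2 →
        (∫ x in (0:ℝ)..ℓ, (whx x) ^ 2) ≤ Mx ^ 2 →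
        -- the residual ê₂ = (ε² − ε̂²)(∂_τŵ + ½∂_x|ŵ|²) + (γ − γ̂)|ŵ|ŵ
        (∀ x : ℝ, eh2 x
            = (ε ^ 2 - εh ^ 2) * (wht x + wh x * whx x)
              + (γ - γh) * (|wh x| * wh x)) →
        C1 * (∫ x in (0:ℝ)..ℓ, ((0:ℝ)) ^ 2)
            + C2 * (∫ x in (0:ℝ)..ℓ, (eh2 x) ^ 2)
            + C3 * (∫ x in (0:ℝ)..ℓ, |eh2 x| ^ ((3:ℝ) / 2))
          ≤ C3' * |ε ^ 2 - εh ^ 2| ^ ((3:ℝ) / 2)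
            + C3'' * |γ - γh| ^ ((3:ℝ) / 2) := by
  set K := Mt ^ 2 + wbar ^ 2 * Mx ^ 2
  set c : ℝ := 2 ^ ((3:ℝ) / 2 - 1)
  refine ⟨C2 * (4 * √(εbar ^ 2) * K) + C3 * (c * (ℓ + 2 * K)),
    C2 * (2 * √(γhi - γlo) * (wbar ^ 2) ^ 2 * ℓ) + C3 * (c * (wbar ^ 2) ^ ((3:ℝ) / 2) * ℓ),
    by positivity, by positivity, ?_⟩
  intro ε εh γ γh wh wht whx eh2 hε₀ hε hεh₀ hεh hγ₀ hγ hγh₀ hγh hcwh hcwht hcwhx hwh _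
    hMt hMx heh2
  have hε_sub : |ε ^ 2 - εh ^ 2| ≤ εbar ^ 2 := abs_sub_le_of_nonneg_of_le (sq_nonneg ε)
    (pow_le_pow_left₀ hε₀ hε 2) (sq_nonneg εh) (pow_le_pow_left₀ hεh₀ hεh 2)
  have hγ_sub : |γ - γh| ≤ γhi - γlo := abs_sub_le_of_le_of_le hγ₀ hγ hγh₀ hγh
  have hε_sq := sq_le_sqrt_mul_rpow_of_le (abs_nonneg _) hε_sub
  have hγ_sq := sq_le_sqrt_mul_rpow_of_le (abs_nonneg _) hγ_sub
  rw [sq_abs] at hε_sq hγ_sq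
  have h_sq := integral_residual_sq_le hℓ.le hwh hcwh hcwht hcwhx hMt hMx
    (ε ^ 2 - εh ^ 2) (γ - γh)
  have h_rpow := integral_abs_residual_rpow_le hℓ.le hwh hcwh hcwht hcwhx hMt hMx
    (ε ^ 2 - εh ^ 2) (γ - γh) (p := 3 / 2) (by norm_num) (by norm_num)
  simp only [heh2, zero_pow two_ne_zero, integral_zero, mul_zero, zero_add]
  calc _
      ≤ C2 * (4 * (ε ^ 2 - εh ^ 2) ^ 2 * K + 2 * (γ - γh) ^ 2 * (wbar ^ 2) ^ 2 * ℓ)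
        + C3 * (c * (|ε ^ 2 - εh ^ 2| ^ ((3:ℝ) / 2) * (ℓ + 2 * K)
          + |γ - γh| ^ ((3:ℝ) / 2) * (wbar ^ 2) ^ ((3:ℝ) / 2) * ℓ)) := by gcongr
    _ ≤ C2 * (4 * (√(εbar ^ 2) * |ε ^ 2 - εh ^ 2| ^ ((3:ℝ) / 2)) * K
          + 2 * (√(γhi - γlo) * |γ - γh| ^ ((3:ℝ) / 2)) * (wbar ^ 2) ^ 2 * ℓ)
        + C3 * (c * (|ε ^ 2 - εh ^ 2| ^ ((3:ℝ) / 2) * (ℓ + 2 * K)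
          + |γ - γh| ^ ((3:ℝ) / 2) * (wbar ^ 2) ^ ((3:ℝ) / 2) * ℓ)) := by gcongr
    _ = _ := by ring

/-- bound for the perturbation functional
`P(ê) = C₁‖ê₁‖²_{L²} + C₂‖ê₂‖²_{L²} + C₃‖ê₂‖^{3/2}_{L^{3/2}}` of the residual
`ê₁ = 0`, `ê₂ = (ε² − ε̂²)(∂_τŵ + ½∂_x|ŵ|²) + (γ − γ̂)|ŵ|ŵ`:
`P(ê) ≤ Ĉ₃' |ε² − ε̂²|^{3/2} + Ĉ₃'' |γ − γ̂|^{3/2}`, with constants depending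
only on the bounds in (A1)–(A2), the constants of condition (C3), and the
`L^∞(0,T;L²)` norms of `∂_τŵ` and `∂_xŵ`. -/
theorem residual_perturbation_functional_bound
    (ℓ : ℝ) (hℓ : 0 < ℓ)
    (wbar εbar γlo γhi Mt Mx : ℝ)
    (hwbar : 0 < wbar) (hεbar : 0 < εbar) (hγlo : 0 < γlo) (hγγ : γlo ≤ γhi)
    (hMt : 0 ≤ Mt) (hMx : 0 ≤ Mx)
    -- the constants of the perturbation bound in condition (C3)
    (C1 C2 C3 : ℝ) (hC1 : 0 ≤ C1) (hC2 : 0 ≤ C2) (hC3 : 0 ≤ C3) :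
    ∃ C3' C3'' : ℝ, 0 ≤ C3' ∧ 0 ≤ C3'' ∧
      ∀ (ε εh γ γh : ℝ) (wh wht whx eh2 : ℝ → ℝ),
        0 ≤ ε → ε ≤ εbar → 0 ≤ εh → εh ≤ εbar →
        γlo ≤ γ → γ ≤ γhi → γlo ≤ γh → γh ≤ γhi →
        Continuous wh → Continuous wht → Continuous whx →
        -- ŵ is a bounded classical solution profile: |ŵ| ≤ w̄, ∂_xŵ = whx
        (∀ x ∈ Set.Icc (0:ℝ) ℓ, |wh x| ≤ wbar) →
        (∀ x : ℝ, HasDerivAt wh (whx x) x) →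
        -- bounds on ‖∂_τŵ‖_{L^∞(0,T;L²)} and ‖∂_xŵ‖_{L^∞(0,T;L²)}
        (∫ x in (0:ℝ)..ℓ, (wht x) ^ 2) ≤ Mt ^ 2 →
        (∫ x in (0:ℝ)..ℓ, (whx x) ^ 2) ≤ Mx ^ 2 →
        -- the residual ê₂ = (ε² − ε̂²)(∂_τŵ + ½∂_x|ŵ|²) + (γ − γ̂)|ŵ|ŵ
        (∀ x : ℝ, eh2 x
            = (ε ^ 2 - εh ^ 2) * (wht x + wh x * whx x)
              + (γ - γh) * (|wh x| * wh x)) →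
        C1 * (∫ x in (0:ℝ)..ℓ, ((0:ℝ)) ^ 2)
            + C2 * (∫ x in (0:ℝ)..ℓ, (eh2 x) ^ 2)
            + C3 * (∫ x in (0:ℝ)..ℓ, |eh2 x| ^ ((3:ℝ) / 2))
          ≤ C3' * |ε ^ 2 - εh ^ 2| ^ ((3:ℝ) / 2)
            + C3'' * |γ - γh| ^ ((3:ℝ) / 2) :=
  residual_perturbation_functional_bound_general ℓ hℓ wbar εbar γlo γhi Mt Mx C1 C2 C3 hC2 hC3
end

section
/- Let (ρ,w) and (ρ̂,ŵ) be admissible states on (0,ℓ) satisfying assumptions (A1)–(A2) with parameters ε and ε̂ respectively, with (ρ̂,ŵ) Lipschitz continuous, and let h_∂ = (ε²w²/2 + P'(ρ) + gz)|_{{0,ℓ}} and ĥ_∂ = (ε̂²ŵ²/2 + P'(ρ̂) + gz)|_{{0,ℓ}} denote the boundary traces of the co-state enthalpies of the unperturbed and perturbed systems. Then the boundary term satisfies −[(h(ρ,w) − h(ρ̂,ŵ))(m(ρ,w) − m(ρ̂,ŵ))]₀^ℓ ≤ Ĉ_∂ (|h_∂ − ĥ_∂| + |ε² − ε̂²|),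 where h(ρ̃,w̃) = ε²w̃²/2 + P'(ρ̃) + gz, m(ρ̃,w̃) = aρ̃w̃, and Ĉ_∂ depends only on the bounds in (A1)–(A2) and the Lipschitz bounds of (ρ̂,ŵ). -/
private lemma boundary_term_bound_aux (M S D W : ℝ) (hM : 0 ≤ M) (hS : 0 ≤ S)
    (hD : 0 ≤ D) :
    (S + D * W ^ 2 / 2) * (2 * M) + (S + D * W ^ 2 / 2) * (2 * M)
      ≤ 2 * M * (2 + W ^ 2) * (S + D) := by
  nlinarith [mul_nonneg hM hD, mul_nonneg (mul_nonneg hM (sq_nonneg W)) hS]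

set_option maxHeartbeats 1600000


/-- condition (C4): boundary term estimate. With the co-state
maps `h(ρ̃,w̃) = ε²w̃²/2 + P'(ρ̃) + gz` and `m(ρ̃,w̃) = aρ̃w̃` of the unperturbed
system, the boundary term satisfies
`−[(h(ρ,w) − h(ρ̂,ŵ))(m(ρ,w) − m(ρ̂,ŵ))]₀^ℓ ≤ Ĉ_∂ (|h_∂ − ĥ_∂|_∂ + |ε² − ε̂²|)`,
where `h_∂` and `ĥ_∂` are the boundary traces of the co-state enthalpies of the
unperturbed (`ε`) and perturbed (`ε̂`) systems and `|·|_∂` is the euclidean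
norm of the trace at `{0,ℓ}`. -/
theorem boundary_term_bound
    (ℓ g : ℝ) (hℓ : 0 < ℓ)
    (P : ℝ → ℝ) (hP : ContDiff ℝ (⊤ : ℕ∞) P) (hPconv : StrictConvexOn ℝ (Set.Ioi 0) P)
    (rlo rhi wbar εbar alo ahi gzbar : ℝ) (K : NNReal)
    (hrlo : 0 < rlo) (hrr : rlo ≤ rhi) (hwbar : 0 < wbar) (hεbar : 0 < εbar)
    (halo : 0 < alo) (haa : alo ≤ ahi)
    (hA1 : ∀ r ∈ Set.Icc rlo rhi, 4 * εbar ^ 2 * wbar ^ 2 ≤ r * deriv (deriv P) r) :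
    ∃ Cb : ℝ, 0 ≤ Cb ∧
      ∀ (a z : ℝ → ℝ) (ε εh : ℝ) (ρ w ρh wh : ℝ → ℝ),
        Continuous a → Continuous z →
        Continuous ρ → Continuous w →
        (∀ x, alo ≤ a x ∧ a x ≤ ahi) → (∀ x, |g * z x| ≤ gzbar) →
        0 ≤ ε → ε ≤ εbar → 0 ≤ εh → εh ≤ εbar →
        (∀ x ∈ Set.Icc (0:ℝ) ℓ,
          rlo ≤ ρ x ∧ ρ x ≤ rhi ∧ rlo ≤ ρh x ∧ ρh x ≤ rhi
            ∧ |w x| ≤ wbar ∧ |wh x| ≤ wbar) →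
        -- (ρ̂,ŵ) is Lipschitz continuous
        LipschitzOnWith K ρh (Set.Icc (0:ℝ) ℓ) →
        LipschitzOnWith K wh (Set.Icc (0:ℝ) ℓ) →
        -- boundary term of the relative energy balance
        - (((ε ^ 2 * (w ℓ) ^ 2 / 2 + deriv P (ρ ℓ) + g * z ℓ)
              - (ε ^ 2 * (wh ℓ) ^ 2 / 2 + deriv P (ρh ℓ) + g * z ℓ))
            * (a ℓ * ρ ℓ * w ℓ - a ℓ * ρh ℓ * wh ℓ)
          - ((ε ^ 2 * (w 0) ^ 2 / 2 + deriv P (ρ 0) + g * z 0)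
              - (ε ^ 2 * (wh 0) ^ 2 / 2 + deriv P (ρh 0) + g * z 0))
            * (a 0 * ρ 0 * w 0 - a 0 * ρh 0 * wh 0))
          ≤ Cb * (Real.sqrt
              (((ε ^ 2 * (w 0) ^ 2 / 2 + deriv P (ρ 0) + g * z 0)
                  - (εh ^ 2 * (wh 0) ^ 2 / 2 + deriv P (ρh 0) + g * z 0)) ^ 2
                + ((ε ^ 2 * (w ℓ) ^ 2 / 2 + deriv P (ρ ℓ) + g * z ℓ)
                  - (εh ^ 2 * (wh ℓ) ^ 2 / 2 + deriv P (ρh ℓ) + g * z ℓ)) ^ 2)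
              + |ε ^ 2 - εh ^ 2|) := by
  have hahi : 0 < ahi := lt_of_lt_of_le halo haa
  have hrhi : 0 < rhi := lt_of_lt_of_le hrlo hrr
  have hM0 : 0 < ahi * rhi * wbar := mul_pos (mul_pos hahi hrhi) hwbar
  have hCb : 0 ≤ 2 * (ahi * rhi * wbar) * (2 + wbar ^ 2) :=
    mul_nonneg (mul_nonneg (by norm_num) hM0.le) (by positivity)
  refine ⟨2 * (ahi * rhi * wbar) * (2 + wbar ^ 2), hCb, ?_⟩
  intro a z ε εh ρ w ρh wh _ _ _ _ ha hz hε hεb hεh hεhb hbnd _ _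
  have h0m : (0:ℝ) ∈ Set.Icc (0:ℝ) ℓ := ⟨le_refl 0, hℓ.le⟩
  have hlm : ℓ ∈ Set.Icc (0:ℝ) ℓ := ⟨hℓ.le, le_refl ℓ⟩
  obtain ⟨hr0, hr0', hrh0, hrh0', hw0, hwh0⟩ := hbnd 0 h0m
  obtain ⟨hrl, hrl', hrhl, hrhl', hwl, hwhl⟩ := hbnd ℓ hlm
  clear hbnd
  set d0 : ℝ := (ε ^ 2 * (w 0) ^ 2 / 2 + deriv P (ρ 0) + g * z 0)
      - (ε ^ 2 * (wh 0) ^ 2 / 2 + deriv P (ρh 0) + g * z 0) with hd0def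
  set dl : ℝ := (ε ^ 2 * (w ℓ) ^ 2 / 2 + deriv P (ρ ℓ) + g * z ℓ)
      - (ε ^ 2 * (wh ℓ) ^ 2 / 2 + deriv P (ρh ℓ) + g * z ℓ) with hdldef
  set e0 : ℝ := (ε ^ 2 * (w 0) ^ 2 / 2 + deriv P (ρ 0) + g * z 0)
      - (εh ^ 2 * (wh 0) ^ 2 / 2 + deriv P (ρh 0) + g * z 0) with he0def
  set el : ℝ := (ε ^ 2 * (w ℓ) ^ 2 / 2 + deriv P (ρ ℓ) + g * z ℓ)
      - (εh ^ 2 * (wh ℓ) ^ 2 / 2 + deriv P (ρh ℓ) + g * z ℓ) with heldef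
  set m0 : ℝ := a 0 * ρ 0 * w 0 - a 0 * ρh 0 * wh 0 with hm0def
  set ml : ℝ := a ℓ * ρ ℓ * w ℓ - a ℓ * ρh ℓ * wh ℓ with hmldef
  set S : ℝ := Real.sqrt (e0 ^ 2 + el ^ 2) with hSdef
  set Δ : ℝ := |ε ^ 2 - εh ^ 2| with hDdef
  clear_value d0 dl e0 el m0 ml S Δ
  have hS0 : 0 ≤ S := hSdef ▸ Real.sqrt_nonneg _
  have hD0 : 0 ≤ Δ := hDdef ▸ abs_nonneg _
  set M : ℝ := ahi * rhi * wbar with hMdef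
  clear_value M
  have hM : 0 ≤ M := hM0.le
  -- each momentum term is bounded by `M`
  have hterm : ∀ u v t : ℝ, alo ≤ u → u ≤ ahi → rlo ≤ v → v ≤ rhi →
      |t| ≤ wbar → |u * v * t| ≤ M := by
    intro u v t h1 h2 h3 h4 h5
    have huabs : |u| ≤ ahi := abs_le.mpr ⟨by linarith only [hahi, halo, h1], h2⟩
    have hvabs : |v| ≤ rhi := abs_le.mpr ⟨by linarith only [hrhi, hrlo, h3], h4⟩
    calc |u * v * t| = |u| * |v| * |t| := by rw [abs_mul, abs_mul]
      _ ≤ M := by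
          rw [hMdef]
          apply mul_le_mul _ h5 (abs_nonneg _) (mul_nonneg hahi.le hrhi.le)
          exact mul_le_mul huabs hvabs (abs_nonneg _) hahi.le
  have hm0b : |m0| ≤ 2 * M := by
    rw [hm0def]
    calc |a 0 * ρ 0 * w 0 - a 0 * ρh 0 * wh 0| ≤ |a 0 * ρ 0 * w 0| + |a 0 * ρh 0 * wh 0| := abs_sub _ _
      _ ≤ M + M := add_le_add
          (hterm _ _ _ (ha 0).1 (ha 0).2 hr0 hr0' hw0)
          (hterm _ _ _ (ha 0).1 (ha 0).2 hrh0 hrh0' hwh0)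
      _ = 2 * M := by ring
  have hmlb : |ml| ≤ 2 * M := by
    rw [hmldef]
    calc |a ℓ * ρ ℓ * w ℓ - a ℓ * ρh ℓ * wh ℓ| ≤ |a ℓ * ρ ℓ * w ℓ| + |a ℓ * ρh ℓ * wh ℓ| := abs_sub _ _
      _ ≤ M + M := add_le_add
          (hterm _ _ _ (ha ℓ).1 (ha ℓ).2 hrl hrl' hwl)
          (hterm _ _ _ (ha ℓ).1 (ha ℓ).2 hrhl hrhl' hwhl)
      _ = 2 * M := by ring
  -- the sqrt dominates each of |e0|, |el|
  have he0S : |e0| ≤ S := by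
    rw [hSdef, ← Real.sqrt_sq_eq_abs]
    exact Real.sqrt_le_sqrt (by linarith only [sq_nonneg el])
  have helS : |el| ≤ S := by
    rw [hSdef, ← Real.sqrt_sq_eq_abs]
    exact Real.sqrt_le_sqrt (by linarith only [sq_nonneg e0])
  -- bound |d| by |e| plus the ε-discrepancy
  have hdiff : ∀ dd ee t : ℝ, dd = ee + (εh ^ 2 - ε ^ 2) * t ^ 2 / 2 →
      |t| ≤ wbar → |ee| ≤ S → |dd| ≤ S + Δ * wbar ^ 2 / 2 := by
    intro dd ee t hsum ht he
    have ht2 : t ^ 2 ≤ wbar ^ 2 := sq_le_sq' (neg_le_of_abs_le ht) (le_of_abs_le ht)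
    have h1 : |(εh ^ 2 - ε ^ 2) * t ^ 2 / 2| ≤ Δ * wbar ^ 2 / 2 := by
      rw [abs_div, abs_mul, abs_of_nonneg (show (0:ℝ) ≤ 2 by norm_num),
        abs_of_nonneg (sq_nonneg t), abs_sub_comm, ← hDdef]
      have h3 : Δ * t ^ 2 ≤ Δ * wbar ^ 2 := mul_le_mul_of_nonneg_left ht2 hD0
      linarith only [h3]
    calc |dd| = |ee + (εh ^ 2 - ε ^ 2) * t ^ 2 / 2| := by rw [hsum]
      _ ≤ |ee| + |(εh ^ 2 - ε ^ 2) * t ^ 2 / 2| := abs_add_le _ _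
      _ ≤ S + Δ * wbar ^ 2 / 2 := add_le_add he h1
  have hd0b : |d0| ≤ S + Δ * wbar ^ 2 / 2 :=
    hdiff d0 e0 (wh 0) (by rw [hd0def, he0def]; ring) hwh0 he0S
  have hdlb : |dl| ≤ S + Δ * wbar ^ 2 / 2 :=
    hdiff dl el (wh ℓ) (by rw [hdldef, heldef]; ring) hwhl helS
  have hSB : 0 ≤ S + Δ * wbar ^ 2 / 2 := by
    have h4 := mul_nonneg hD0 (sq_nonneg wbar); linarith only [hS0, h4]
  have hA : -(dl * ml) ≤ (S + Δ * wbar ^ 2 / 2) * (2 * M) :=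
    calc -(dl * ml) ≤ |dl * ml| := neg_le_abs _
      _ = |dl| * |ml| := abs_mul _ _
      _ ≤ (S + Δ * wbar ^ 2 / 2) * (2 * M) :=
          mul_le_mul hdlb hmlb (abs_nonneg _) hSB
  have hB : d0 * m0 ≤ (S + Δ * wbar ^ 2 / 2) * (2 * M) :=
    calc d0 * m0 ≤ |d0 * m0| := le_abs_self _
      _ = |d0| * |m0| := abs_mul _ _
      _ ≤ (S + Δ * wbar ^ 2 / 2) * (2 * M) :=
          mul_le_mul hd0b hm0b (abs_nonneg _) hSB
  have key1 : 0 ≤ M * Δ := mul_nonneg hM hD0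
  have key2 : 0 ≤ M * wbar ^ 2 * S := mul_nonneg (mul_nonneg hM (sq_nonneg wbar)) hS0
  have hfin : (S + Δ * wbar ^ 2 / 2) * (2 * M) + (S + Δ * wbar ^ 2 / 2) * (2 * M)
      ≤ 2 * M * (2 + wbar ^ 2) * (S + Δ) :=
    boundary_term_bound_aux M S Δ wbar hM hS0 hD0
  linarith only [hA, hB, hfin]
end

section
/- Let (ρ,w) be a sufficiently smooth solution of the rescaled barotropic gas flow system a ∂_τ ρ + ∂_x m = 0, ε² ∂_τ w + ∂_x h + γ|w|w = 0 on (0,ℓ) with m = aρw and h = ε²w²/2 + P'(ρ) + gz, with ρ > 0 pointwise. Then the energy-dissipation identity d/dτ H(ρ,w) + ∫₀^ℓ γ a ρ |w|³ dx = −[m h]₀^ℓ holds, where [m h]₀^ℓ = m(ℓ)h(ℓ) − m(0)h(0); i.e., the free energy changes only due to friction at the pipe walls and energy transfer across the boundary. -/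
open Function MeasureTheory Metric Set intervalIntegral

noncomputable def pd1 (f : ℝ → ℝ → ℝ) (t x : ℝ) : ℝ :=
  fderiv ℝ (uncurry f) (t, x) (1, 0)

noncomputable def pd2 (f : ℝ → ℝ → ℝ) (t x : ℝ) : ℝ :=
  fderiv ℝ (uncurry f) (t, x) (0, 1)

lemma pd1_hasDerivAt {f : ℝ → ℝ → ℝ} (hf : ContDiff ℝ 2 (uncurry f)) (t x : ℝ) :
    HasDerivAt (fun s => f s x) (pd1 f t x) t := by
  have h1 : HasFDerivAt (uncurry f) (fderiv ℝ (uncurry f) (t, x)) (t, x) :=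
    (hf.differentiable (by norm_num) (t, x)).hasFDerivAt
  have h2 : HasDerivAt (fun s : ℝ => ((s, x) : ℝ × ℝ)) ((1 : ℝ), (0 : ℝ)) t :=
    (hasDerivAt_id t).prodMk (hasDerivAt_const t x)
  exact h1.comp_hasDerivAt t h2

lemma pd2_hasDerivAt {f : ℝ → ℝ → ℝ} (hf : ContDiff ℝ 2 (uncurry f)) (t x : ℝ) :
    HasDerivAt (fun y => f t y) (pd2 f t x) x := by
  have h1 : HasFDerivAt (uncurry f) (fderiv ℝ (uncurry f) (t, x)) (t, x) :=
    (hf.differentiable (by norm_num) (t, x)).hasFDerivAt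
  have h2 : HasDerivAt (fun y : ℝ => ((t, y) : ℝ × ℝ)) ((0 : ℝ), (1 : ℝ)) x :=
    (hasDerivAt_const x t).prodMk (hasDerivAt_id x)
  exact h1.comp_hasDerivAt x h2

lemma pd1_continuous {f : ℝ → ℝ → ℝ} (hf : ContDiff ℝ 2 (uncurry f)) :
    Continuous (fun p : ℝ × ℝ => pd1 f p.1 p.2) := by
  have h := (hf.fderiv_right (m := 1) (by norm_num)).continuous
  exact h.clm_apply continuous_const

lemma pd2_continuous {f : ℝ → ℝ → ℝ} (hf : ContDiff ℝ 2 (uncurry f)) :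
    Continuous (fun p : ℝ × ℝ => pd2 f p.1 p.2) := by
  have h := (hf.fderiv_right (m := 1) (by norm_num)).continuous
  exact h.clm_apply continuous_const

/-- energy-dissipation identity. For sufficiently smooth
solutions `(ρ,w)` of the rescaled barotropic gas flow system
`a ∂_τ ρ + ∂_x m = 0`, `ε² ∂_τ w + ∂_x h + γ|w|w = 0` with `m = aρw` and
`h = ε²w²/2 + P'(ρ) + gz`, one has
`d/dτ H(ρ,w) + ∫₀^ℓ γ a ρ |w|³ dx = −[m h]₀^ℓ`,
where `H(ρ,w) = ∫₀^ℓ a (ε² ρ w²/2 + P(ρ) + g z ρ) dx`. -/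
theorem energy_dissipation_identity
    (ℓ ε γ g : ℝ) (hℓ : 0 < ℓ) (hε : 0 < ε) (hγ : 0 < γ)
    (a z : ℝ → ℝ) (ha : ContDiff ℝ 1 a) (hz : ContDiff ℝ 1 z)
    (hapos : ∀ x, 0 < a x)
    (P : ℝ → ℝ) (hP : ContDiff ℝ (⊤ : ℕ∞) P) (hPconv : StrictConvexOn ℝ (Set.Ioi 0) P)
    (ρ w : ℝ → ℝ → ℝ)
    (hρ : ContDiff ℝ 2 (Function.uncurry ρ)) (hw : ContDiff ℝ 2 (Function.uncurry w))
    (hρpos : ∀ τ x, 0 < ρ τ x)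
    -- mass balance: a ∂_τ ρ + ∂_x m = 0
    (hmass : ∀ τ x : ℝ,
      a x * deriv (fun s => ρ s x) τ
        + deriv (fun y => a y * ρ τ y * w τ y) x = 0)
    -- momentum balance: ε² ∂_τ w + ∂_x h + γ|w|w = 0
    (hmom : ∀ τ x : ℝ,
      ε ^ 2 * deriv (fun s => w s x) τ
        + deriv (fun y => ε ^ 2 * (w τ y) ^ 2 / 2 + deriv P (ρ τ y) + g * z y) x
        + γ * |w τ x| * w τ x = 0) :
    ∀ τ : ℝ,
      HasDerivAt
        (fun t => ∫ x in (0:ℝ)..ℓ,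
          a x * (ε ^ 2 * ρ t x * (w t x) ^ 2 / 2 + P (ρ t x) + g * z x * ρ t x))
        (- (∫ x in (0:ℝ)..ℓ, γ * a x * ρ τ x * |w τ x| ^ 3)
          - ((a ℓ * ρ τ ℓ * w τ ℓ)
                * (ε ^ 2 * (w τ ℓ) ^ 2 / 2 + deriv P (ρ τ ℓ) + g * z ℓ)
              - (a 0 * ρ τ 0 * w τ 0)
                * (ε ^ 2 * (w τ 0) ^ 2 / 2 + deriv P (ρ τ 0) + g * z 0))) τ := by
  intro τ
  -- basic continuity / differentiability facts
  have hac : Continuous a := ha.continuous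
  have hzc : Continuous z := hz.continuous
  have hρc : Continuous (fun p : ℝ × ℝ => ρ p.1 p.2) := hρ.continuous
  have hwc : Continuous (fun p : ℝ × ℝ => w p.1 p.2) := hw.continuous
  have hPtop : ContDiff ℝ (⊤ : ℕ∞) P := hP.of_le (by simp)
  have hPd : Differentiable ℝ P := hPtop.differentiable (by simp)
  have hP1 : ContDiff ℝ (⊤ : ℕ∞) (deriv P) := (contDiff_infty_iff_deriv.mp hPtop).2
  have hP1c : Continuous (deriv P) := hP1.continuous
  have hP1d : Differentiable ℝ (deriv P) := hP1.differentiable (by simp)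
  have hP2c : Continuous (deriv (deriv P)) := (contDiff_infty_iff_deriv.mp hP1).2.continuous
  have hadc : Continuous (deriv a) := (contDiff_one_iff_deriv.mp ha).2
  have hzdc : Continuous (deriv z) := (contDiff_one_iff_deriv.mp hz).2
  have had : Differentiable ℝ a := ha.differentiable one_ne_zero
  have hzd : Differentiable ℝ z := hz.differentiable one_ne_zero
  have Hρt := pd1_hasDerivAt hρ
  have Hwt := pd1_hasDerivAt hw
  have Hρx := pd2_hasDerivAt hρ
  have Hwx := pd2_hasDerivAt hw
  have Cρt := pd1_continuous hρ
  have Cwt := pd1_continuous hw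
  have Cρx := pd2_continuous hρ
  have Cwx := pd2_continuous hw
  -- the t-derivative of the integrand
  set G : ℝ → ℝ → ℝ := fun t x =>
    a x * (ε ^ 2 * (pd1 ρ t x * (w t x) ^ 2 + ρ t x * (2 * w t x * pd1 w t x)) / 2
      + deriv P (ρ t x) * pd1 ρ t x + g * z x * pd1 ρ t x) with hGdef
  have HF : ∀ t x : ℝ,
      HasDerivAt (fun s => a x * (ε ^ 2 * ρ s x * (w s x) ^ 2 / 2 + P (ρ s x)
        + g * z x * ρ s x)) (G t x) t := by
    intro t x
    have h1 := Hρt t x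
    have h2 := Hwt t x
    have hsq : HasDerivAt (fun s => (w s x) ^ 2) (2 * w t x * pd1 w t x) t := by
      simpa using h2.fun_pow 2
    have B1 : HasDerivAt (fun s => ε ^ 2 * ρ s x * (w s x) ^ 2 / 2)
        (((ε ^ 2 * pd1 ρ t x) * (w t x) ^ 2 + (ε ^ 2 * ρ t x) * (2 * w t x * pd1 w t x)) / 2)
        t := ((h1.const_mul (ε ^ 2)).mul hsq).div_const 2
    have B2 : HasDerivAt (fun s => P (ρ s x)) (deriv P (ρ t x) * pd1 ρ t x) t :=
      (hPd (ρ t x)).hasDerivAt.comp t h1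
    have B3 : HasDerivAt (fun s => g * z x * ρ s x) ((g * z x) * pd1 ρ t x) t :=
      h1.const_mul (g * z x)
    have B := ((B1.add B2).add B3).const_mul (a x)
    have : a x * ((((ε ^ 2 * pd1 ρ t x) * (w t x) ^ 2
          + (ε ^ 2 * ρ t x) * (2 * w t x * pd1 w t x)) / 2
          + deriv P (ρ t x) * pd1 ρ t x) + (g * z x) * pd1 ρ t x) = G t x := by
      rw [hGdef]; ring
    exact this ▸ B
  -- continuity of G
  have CG : Continuous (fun p : ℝ × ℝ => G p.1 p.2) := by
    rw [hGdef]
    fun_prop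
  -- differentiate under the integral sign
  have hmain : HasDerivAt
      (fun t => ∫ x in (0:ℝ)..ℓ,
        a x * (ε ^ 2 * ρ t x * (w t x) ^ 2 / 2 + P (ρ t x) + g * z x * ρ t x))
      (∫ x in (0:ℝ)..ℓ, G τ x) τ := by
    obtain ⟨C, hC⟩ := (IsCompact.prod (isCompact_Icc (a := τ - 1) (b := τ + 1))
      (isCompact_uIcc (a := (0:ℝ)) (b := ℓ))).exists_bound_of_continuousOn CG.continuousOn
    have cont_t : ∀ t : ℝ, Continuous fun x =>
        a x * (ε ^ 2 * ρ t x * (w t x) ^ 2 / 2 + P (ρ t x) + g * z x * ρ t x) := by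
      intro t
      have c1 : Continuous (ρ t) := hρc.comp (Continuous.prodMk_right t)
      have c2 : Continuous (w t) := hwc.comp (Continuous.prodMk_right t)
      fun_prop
    refine (intervalIntegral.hasDerivAt_integral_of_dominated_loc_of_deriv_le (F' := G)
      (bound := fun _ => C) (ball_mem_nhds τ one_pos) ?_ ?_ ?_ ?_ ?_ ?_).2
    · exact Filter.Eventually.of_forall fun t => ((cont_t t).aestronglyMeasurable).restrict
    · exact (cont_t τ).intervalIntegrable 0 ℓ
    · exact ((CG.comp (Continuous.prodMk_right τ)).aestronglyMeasurable).restrict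
    · refine Filter.Eventually.of_forall fun x hx => fun t ht => ?_
      have hmem : ((t, x) : ℝ × ℝ) ∈ Icc (τ - 1) (τ + 1) ×ˢ uIcc (0:ℝ) ℓ := by
        constructor
        · have := mem_ball_iff_norm.mp ht
          simp only [Real.norm_eq_abs] at this
          constructor <;> [linarith [abs_le.mp this.le]; linarith [(abs_le.mp this.le).2]]
        · exact uIoc_subset_uIcc hx
      have := hC (t, x) hmem
      simpa using this
    · exact intervalIntegrable_const
    · exact Filter.Eventually.of_forall fun x _ => fun t _ => HF t x
  -- spatial derivatives at time τ
  set mx : ℝ → ℝ := fun x =>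
    (deriv a x * ρ τ x + a x * pd2 ρ τ x) * w τ x + a x * ρ τ x * pd2 w τ x with hmxdef
  set hx : ℝ → ℝ := fun x =>
    ε ^ 2 * (2 * w τ x * pd2 w τ x) / 2 + deriv (deriv P) (ρ τ x) * pd2 ρ τ x
      + g * deriv z x with hhxdef
  have Hm : ∀ x : ℝ, HasDerivAt (fun y => a y * ρ τ y * w τ y) (mx x) x := by
    intro x
    exact (((had x).hasDerivAt.mul (Hρx τ x)).mul (Hwx τ x))
  have Hh : ∀ x : ℝ, HasDerivAt
      (fun y => ε ^ 2 * (w τ y) ^ 2 / 2 + deriv P (ρ τ y) + g * z y) (hx x) x := by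
    intro x
    have hsq : HasDerivAt (fun y => (w τ y) ^ 2) (2 * w τ x * pd2 w τ x) x := by
      simpa using (Hwx τ x).fun_pow 2
    have C1 : HasDerivAt (fun y => ε ^ 2 * (w τ y) ^ 2 / 2)
        (ε ^ 2 * (2 * w τ x * pd2 w τ x) / 2) x := (hsq.const_mul (ε ^ 2)).div_const 2
    have C2 : HasDerivAt (fun y => deriv P (ρ τ y))
        (deriv (deriv P) (ρ τ x) * pd2 ρ τ x) x :=
      (hP1d (ρ τ x)).hasDerivAt.comp x (Hρx τ x)
    have C3 : HasDerivAt (fun y => g * z y) (g * deriv z x) x :=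
      (hzd x).hasDerivAt.const_mul g
    exact (C1.add C2).add C3
  set D : ℝ → ℝ := fun x =>
    mx x * (ε ^ 2 * (w τ x) ^ 2 / 2 + deriv P (ρ τ x) + g * z x)
      + (a x * ρ τ x * w τ x) * hx x with hDdef
  have Hmh : ∀ x : ℝ, HasDerivAt
      (fun y => (a y * ρ τ y * w τ y)
          * (ε ^ 2 * (w τ y) ^ 2 / 2 + deriv P (ρ τ y) + g * z y)) (D x) x :=
    fun x => (Hm x).mul (Hh x)
  -- continuity of the relevant x-functions at time τ
  have cρτ : Continuous (ρ τ) := hρc.comp (Continuous.prodMk_right τ)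
  have cwτ : Continuous (w τ) := hwc.comp (Continuous.prodMk_right τ)
  have cρx : Continuous (fun x => pd2 ρ τ x) := Cρx.comp (Continuous.prodMk_right τ)
  have cwx : Continuous (fun x => pd2 w τ x) := Cwx.comp (Continuous.prodMk_right τ)
  have CD : Continuous D := by
    rw [hDdef, hmxdef, hhxdef]
    fun_prop
  have Cdiss : Continuous (fun x => γ * a x * ρ τ x * |w τ x| ^ 3) := by fun_prop
  -- pointwise identity
  have key : ∀ x : ℝ, G τ x = -D x - γ * a x * ρ τ x * |w τ x| ^ 3 := by
    intro x
    have e1 : a x * pd1 ρ τ x = -(mx x) := by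
      have h0 := hmass τ x
      rw [(Hρt τ x).deriv, (Hm x).deriv] at h0
      linarith
    have e2 : ε ^ 2 * pd1 w τ x = -(hx x) - γ * |w τ x| * w τ x := by
      have h0 := hmom τ x
      rw [(Hwt τ x).deriv, (Hh x).deriv] at h0
      linarith
    have eabs : |w τ x| ^ 3 = (w τ x) ^ 2 * |w τ x| := by
      rw [pow_succ, sq_abs]
    rw [hGdef, hDdef]
    simp only
    linear_combination (ε ^ 2 * (w τ x) ^ 2 / 2 + deriv P (ρ τ x) + g * z x) * e1
      + (a x * ρ τ x * w τ x) * e2 + γ * a x * ρ τ x * eabs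
  -- compute the integral of G τ
  have hFT : ∫ x in (0:ℝ)..ℓ, D x
      = (a ℓ * ρ τ ℓ * w τ ℓ) * (ε ^ 2 * (w τ ℓ) ^ 2 / 2 + deriv P (ρ τ ℓ) + g * z ℓ)
        - (a 0 * ρ τ 0 * w τ 0) * (ε ^ 2 * (w τ 0) ^ 2 / 2 + deriv P (ρ τ 0) + g * z 0) :=
    integral_eq_sub_of_hasDerivAt (fun x _ => Hmh x) (CD.intervalIntegrable 0 ℓ)
  have int_eq : ∫ x in (0:ℝ)..ℓ, G τ x
      = - (∫ x in (0:ℝ)..ℓ, γ * a x * ρ τ x * |w τ x| ^ 3)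
        - ((a ℓ * ρ τ ℓ * w τ ℓ) * (ε ^ 2 * (w τ ℓ) ^ 2 / 2 + deriv P (ρ τ ℓ) + g * z ℓ)
          - (a 0 * ρ τ 0 * w τ 0) * (ε ^ 2 * (w τ 0) ^ 2 / 2 + deriv P (ρ τ 0) + g * z 0)) := by
    rw [integral_congr (g := fun x => -D x - γ * a x * ρ τ x * |w τ x| ^ 3)
      (fun x _ => key x)]
    rw [integral_sub (f := fun x => -D x) (CD.neg.intervalIntegrable 0 ℓ) (Cdiss.intervalIntegrable 0 ℓ),
      intervalIntegral.integral_neg, hFT]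
    ring
  rw [← int_eq]
  exact hmain
end
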